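/- arXiv:2012.12972 — 9 statements merged into one kernel-verified Lean document; each statement's English description precedes it below -/
import Mathlib

section
/- Let d ≥ 3 and let G be a d-regular graph on exactly 2d vertices. Then every edge of G is contained in a triangle of G or in an induced 4-cycle of G. -/
open SimpleGraph

/-- A Δ⁺-switch: five distinct vertices `v w x y z` with `vx, vw, xy, wz` edges
and `xw, yz` non-edges; the edges `xy, wz` are deleted and `xw, yz` are added. -/
def DeltaPlusSwitch {V : Type*} (G G' : SimpleGraph V) : Prop :=
  ∃ v w x y z : V, List.Pairwise (· ≠ ·) [v, w, x, y, z] ∧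
    G.Adj v x ∧ G.Adj v w ∧ G.Adj x y ∧ G.Adj w z ∧ ¬ G.Adj x w ∧ ¬ G.Adj y z ∧
    G'.edgeSet = (G.edgeSet \ {s(x, y), s(w, z)}) ∪ {s(x, w), s(y, z)}

/-- A Δ⁻-switch: five distinct vertices `v w x y z` with `vx, vw, xw, yz` edges
and `xy, wz` non-edges; the edges `xw, yz` are deleted and `xy, wz` are added. -/
def DeltaMinusSwitch {V : Type*} (G G' : SimpleGraph V) : Prop :=
  ∃ v w x y z : V, List.Pairwise (· ≠ ·) [v, w, x, y, z] ∧
    G.Adj v x ∧ G.Adj v w ∧ G.Adj x w ∧ G.Adj y z ∧ ¬ G.Adj x y ∧ ¬ G.Adj w z ∧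
    G'.edgeSet = (G.edgeSet \ {s(x, w), s(y, z)}) ∪ {s(x, y), s(w, z)}

/-- A Δ-switch is a Δ⁺-switch or a Δ⁻-switch. -/
def DeltaSwitch {V : Type*} (G G' : SimpleGraph V) : Prop :=
  DeltaPlusSwitch G G' ∨ DeltaMinusSwitch G G'

/-- Two graphs are Δ-switch equivalent if one is obtained from the other by a
finite (possibly empty) sequence of Δ-switches. -/
def DeltaEquiv {V : Type*} (G G' : SimpleGraph V) : Prop :=
  Relation.ReflTransGen DeltaSwitch G G'

/-- A graph is `d`-regular: every vertex has exactly `d` neighbours. -/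
def RegularDeg {V : Type*} (G : SimpleGraph V) (d : ℕ) : Prop :=
  ∀ x : V, (G.neighborSet x).ncard = d

/-- `a b c e` form an induced 4-cycle of `G`, containing the edge `ab`. -/
def IsInducedC4 {V : Type*} (G : SimpleGraph V) (a b c e : V) : Prop :=
  List.Pairwise (· ≠ ·) [a, b, c, e] ∧
    G.Adj a b ∧ G.Adj b c ∧ G.Adj c e ∧ G.Adj e a ∧ ¬ G.Adj a c ∧ ¬ G.Adj b e

/-!
Suppose the edge `ab` lies in no triangle. Then the neighbourhoods of `a` and `b` are disjoint
sets of size `d`, so they cover all `2d` vertices. Take a neighbour `e ≠ b` of `a`. It is not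
adjacent to `b`, and only `d - 2` of its neighbours can lie in `N(a) \ {b, e}`, so at least two
lie in `N(b)`; one of them, `c`, differs from `a`, and `a b c e` is an induced 4-cycle.
-/

open Finset

theorem RegularDeg.isRegularOfDegree {V : Type*} [Fintype V] {G : SimpleGraph V}
    [DecidableRel G.Adj] {d : ℕ} (h : RegularDeg G d) : G.IsRegularOfDegree d := fun v => by
  rw [← h v, ← card_neighborSet_eq_degree, Set.ncard_eq_toFinset_card', Set.toFinset_card]

namespace SimpleGraph

variable {V : Type*} [Fintype V] [DecidableEq V] {G : SimpleGraph V} [DecidableRel G.Adj]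
  {d : ℕ} {a b : V}

theorem neighborFinset_union_eq_univ (hreg : G.IsRegularOfDegree d)
    (hcard : Fintype.card V = 2 * d)
    (hdisj : Disjoint (G.neighborFinset a) (G.neighborFinset b)) :
    G.neighborFinset a ∪ G.neighborFinset b = univ :=
  eq_univ_of_card _ <| by
    rw [card_union_of_disjoint hdisj, card_neighborFinset_eq_degree,
      card_neighborFinset_eq_degree, hreg a, hreg b, hcard, two_mul]

theorem exists_adj_adj_ne_of_card_eq_two_mul (hreg : G.IsRegularOfDegree d)
    (hcard : Fintype.card V = 2 * d)
    (hdisj : Disjoint (G.neighborFinset a) (G.neighborFinset b)) (hab : G.Adj a b)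
    {e : V} (hae : G.Adj a e) (heb : e ≠ b) :
    ∃ c, G.Adj e c ∧ G.Adj b c ∧ c ≠ a := by
  by_contra! hc
  have hcover := neighborFinset_union_eq_univ hreg hcard hdisj
  have hsub : G.neighborFinset e ⊆ insert a (((G.neighborFinset a).erase e).erase b) := by
    intro x hx
    rw [mem_neighborFinset] at hx
    rcases mem_union.1 (hcover ▸ mem_univ x) with hxa | hxb
    · have hxb : x ≠ b := by
        rintro rfl
        exact Finset.disjoint_left.1 hdisj (by simpa using hae) (by simpa using hx.symm)
      exact mem_insert_of_mem (mem_erase.2 ⟨hxb, mem_erase.2 ⟨hx.ne.symm, hxa⟩⟩)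
    · exact mem_insert.2 (Or.inl (hc x hx (by simpa using hxb)))
  have hbe : b ∈ (G.neighborFinset a).erase e := mem_erase.2 ⟨heb.symm, by simpa using hab⟩
  have hcount := (card_le_card hsub).trans (card_insert_le _ _)
  have hea := card_erase_add_one ((G.mem_neighborFinset a e).2 hae)
  have heba := card_erase_add_one hbe
  rw [card_neighborFinset_eq_degree, hreg] at hcount hea
  omega

end SimpleGraph

/-- If `d ≥ 3` and `G` is `d`-regular on exactly `2d` vertices, then every edge of
`G` lies in a triangle or in an induced 4-cycle. -/
theorem edge_in_triangle_or_inducedC4_card_two_d {V : Type*} [Fintype V] {d : ℕ}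
    (hd : 3 ≤ d) (G : SimpleGraph V) (hcard : Fintype.card V = 2 * d)
    (hreg : RegularDeg G d) :
    ∀ a b : V, G.Adj a b →
      (∃ c : V, G.Adj a c ∧ G.Adj b c) ∨ (∃ c e : V, IsInducedC4 G a b c e) := by
  classical
  intro a b hab
  refine or_iff_not_imp_left.2 fun hno_triangle => ?_
  have hdisj : Disjoint (G.neighborFinset a) (G.neighborFinset b) :=
    Finset.disjoint_left.2 fun c hac hbc =>
      hno_triangle ⟨c, by simpa using hac, by simpa using hbc⟩
  obtain ⟨e, hae, heb⟩ := exists_mem_ne (s := G.neighborFinset a)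
    (by rw [card_neighborFinset_eq_degree, hreg.isRegularOfDegree a]; omega) b
  rw [mem_neighborFinset] at hae
  obtain ⟨c, hec, hbc, hca⟩ :=
    exists_adj_adj_ne_of_card_eq_two_mul hreg.isRegularOfDegree hcard hdisj hab hae heb
  refine ⟨c, e, ?_, hab, hbc, hec.symm, hae.symm, fun hac => hno_triangle ⟨c, hac, hbc⟩,
    fun hbe => hno_triangle ⟨e, hae, hbe⟩⟩
  simp [hab.ne, hae.ne, hbc.ne, hec.ne.symm, hca.symm, heb.symm]
end

section
/- Let d ≥ 3 and let G be a triangle-free d-regular graph on exactly 2d vertices. Then G is isomorphic to the complete bipartite graph K_{d,d}. -/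
open SimpleGraph

/-- A triangle-free `d`-regular graph on exactly `2d` vertices (`d ≥ 3`) is
isomorphic to the complete bipartite graph `K_{d,d}`. -/
theorem triangle_free_two_d_iso_complete_bipartite {V : Type*} [Fintype V] {d : ℕ}
    (hd : 3 ≤ d) (G : SimpleGraph V) (hcard : Fintype.card V = 2 * d)
    (hreg : RegularDeg G d) (hfree : G.CliqueFree 3) :
    Nonempty (G ≃g completeBipartiteGraph (Fin d) (Fin d)) := by
  have hreg : ∀ x : V, (G.neighborSet x).ncard = d := hreg
  classical
  have htri : ∀ a b c : V, G.Adj a b → G.Adj a c → ¬ G.Adj b c := by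
    intro a b c hab hac hbc
    exact hfree {a, b, c} (SimpleGraph.is3Clique_triple_iff.mpr ⟨hab, hac, hbc⟩)
  have hVpos : 0 < Fintype.card V := by omega
  obtain ⟨u⟩ : Nonempty V := Fintype.card_pos_iff.mp hVpos
  have hNu : (G.neighborSet u).Nonempty := by
    rw [← Set.ncard_pos (Set.toFinite _), hreg u]; omega
  obtain ⟨v, hv⟩ := hNu
  have huv : G.Adj u v := hv
  set A : Set V := G.neighborSet v with hA
  set B : Set V := G.neighborSet u with hB
  have hAcard : A.ncard = d := hreg v
  have hBcard : B.ncard = d := hreg u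
  have hdisj : ∀ x, x ∈ A → x ∈ B → False := by
    intro x hxA hxB
    exact htri u v x huv hxB hxA
  have hunion : A ∪ B = Set.univ := by
    apply Set.eq_of_subset_of_ncard_le (Set.subset_univ _)
    rw [Set.ncard_univ, Nat.card_eq_fintype_card, hcard,
      Set.ncard_union_eq (Set.disjoint_left.mpr hdisj) (Set.toFinite _) (Set.toFinite _),
      hAcard, hBcard]; omega
  have hmem : ∀ x : V, x ∈ A ∨ x ∈ B := by
    intro x
    have := Set.mem_univ x
    rw [← hunion] at this
    exact this
  -- every vertex of A has neighborhood exactly B, and vice versa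
  have hNA : ∀ x ∈ A, G.neighborSet x = B := by
    intro x hxA
    apply Set.eq_of_subset_of_ncard_le _ (by rw [hreg x, hBcard]) (Set.toFinite _)
    intro y hy
    rcases hmem y with hyA | hyB
    · exact absurd hy (htri v x y hxA hyA)
    · exact hyB
  have hNB : ∀ x ∈ B, G.neighborSet x = A := by
    intro x hxB
    apply Set.eq_of_subset_of_ncard_le _ (by rw [hreg x, hAcard]) (Set.toFinite _)
    intro y hy
    rcases hmem y with hyA | hyB
    · exact hyA
    · exact absurd hy (htri u x y hxB hyB)
  have hadj : ∀ x y : V, G.Adj x y ↔ (x ∈ A ∧ y ∈ B) ∨ (x ∈ B ∧ y ∈ A) := by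
    intro x y
    constructor
    · intro h
      rcases hmem x with hx | hx
      · exact Or.inl ⟨hx, (hNA x hx) ▸ h⟩
      · exact Or.inr ⟨hx, (hNB x hx) ▸ h⟩
    · rintro (⟨hx, hy⟩ | ⟨hx, hy⟩)
      · have h := hNA x hx
        show y ∈ G.neighborSet x
        rw [h]; exact hy
      · have h := hNB x hx
        show y ∈ G.neighborSet x
        rw [h]; exact hy
  have hnotA : ∀ x : V, ¬ x ∈ A ↔ x ∈ B := by
    intro x
    constructor
    · intro h; rcases hmem x with h' | h'; exact absurd h' h; exact h'
    · intro h h'; exact hdisj x h' h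
  have cardA : Fintype.card ↥A = d := by
    rw [← Set.toFinset_card, ← Set.ncard_eq_toFinset_card']; exact hAcard
  have cardB : Fintype.card {x : V // ¬ x ∈ A} = d := by
    rw [Fintype.card_congr (Equiv.subtypeEquivRight hnotA),
      ← Set.toFinset_card, ← Set.ncard_eq_toFinset_card']; exact hBcard
  let eA : ↥A ≃ Fin d := Fintype.equivFinOfCardEq cardA
  let eB : {x : V // ¬ x ∈ A} ≃ Fin d := Fintype.equivFinOfCardEq cardB
  let e : V ≃ (Fin d ⊕ Fin d) :=
    (Equiv.sumCompl (· ∈ A)).symm.trans (Equiv.sumCongr eA eB)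
  refine ⟨{ toEquiv := e, map_rel_iff' := ?_ }⟩
  intro x y
  show (completeBipartiteGraph (Fin d) (Fin d)).Adj (e x) (e y) ↔ G.Adj x y
  rw [hadj]
  by_cases hx : x ∈ A <;> by_cases hy : y ∈ A
  · simp [e, Equiv.sumCompl_symm_apply_of_pos, Equiv.sumCompl_symm_apply_of_neg, hx, hy]
    exact ⟨fun h => hdisj y hy h, fun h => hdisj x hx h⟩
  · simp [e, Equiv.sumCompl_symm_apply_of_pos, Equiv.sumCompl_symm_apply_of_neg, hx, hy]
    exact (hnotA y).mp hy
  · simp [e, Equiv.sumCompl_symm_apply_of_pos, Equiv.sumCompl_symm_apply_of_neg, hx, hy]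
    exact (hnotA x).mp hx
  · simp [e, Equiv.sumCompl_symm_apply_of_pos, Equiv.sumCompl_symm_apply_of_neg, hx, hy]
end

section
/- Let d ≥ 3 and let G be a d-regular graph on exactly 2d+1 vertices. Then every edge of G is contained in a triangle of G or in an induced 4-cycle of G. -/
/-! Suppose the edge `ab` lies in no triangle and no induced 4-cycle, and let
`A = N(a) \ {b}`, `B = N(b) \ {a}`. These are disjoint sets of size `d - 1` with no edge
between them, so the `d` non-neighbours of any `x ∈ A` are exactly `B ∪ {b}`, and symmetrically.
As `|N(a) ∪ N(b)| ≤ 2d`, some vertex `u` lies outside both neighbourhoods; it is then adjacent to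
every vertex of `A ∪ B`, whence `2(d - 1) ≤ d`, impossible for `d ≥ 3`. -/

open SimpleGraph

namespace SimpleGraph

variable {V : Type*} {G : SimpleGraph V}

lemma adj_of_card_le_ncard_neighborSet_add_ncard [Finite V] {x u : V} {S : Set V} (hxS : x ∉ S)
    (hS : ∀ y ∈ S, ¬ G.Adj x y) (hcard : Nat.card V ≤ (G.neighborSet x).ncard + S.ncard + 1)
    (huS : u ∉ S) (hux : u ≠ x) : G.Adj x u := by
  have hsub : G.neighborSet x ⊆ (insert x S)ᶜ := by
    rintro y (hxy : G.Adj x y) (rfl | hyS)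
    exacts [G.irrefl hxy, hS y hyS hxy]
  have hle : (insert x S)ᶜ.ncard ≤ (G.neighborSet x).ncard := by
    rw [Set.ncard_compl, Set.ncard_insert_of_notMem hxS]
    omega
  rw [← mem_neighborSet, Set.eq_of_subset_of_ncard_le hsub hle]
  simp [hux, huS]

end SimpleGraph

section
variable {V : Type*} {G : SimpleGraph V} {a b c e : V}

lemma IsInducedC4.symm (h : IsInducedC4 G a b c e) : IsInducedC4 G b a e c := by
  obtain ⟨hne, hab, hbc, hce, hea, hac, hbe⟩ := h
  refine ⟨?_, hab.symm, hea.symm, hce.symm, hbc.symm, hbe, hac⟩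
  simp only [List.pairwise_cons, List.mem_cons, List.not_mem_nil] at hne ⊢
  grind

lemma isInducedC4_of_not_adj (hab : G.Adj a b) (hbc : G.Adj b c) (hce : G.Adj c e)
    (hea : G.Adj e a) (hac : a ≠ c) (hbe : b ≠ e) (hnac : ¬ G.Adj a c) (hnbe : ¬ G.Adj b e) :
    IsInducedC4 G a b c e := by
  refine ⟨?_, hab, hbc, hce, hea, hnac, hnbe⟩
  simp only [List.pairwise_cons, List.mem_cons, List.not_mem_nil]
  grind [hab.ne, hbc.ne, hce.ne, hea.ne]

lemma not_adj_of_no_triangle_of_no_inducedC4 (hab : G.Adj a b)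
    (htri : ∀ c, G.Adj a c → ¬ G.Adj b c) (hC4 : ∀ c e, ¬ IsInducedC4 G a b c e)
    (hae : G.Adj a e) (hbc : G.Adj b c) (heb : e ≠ b) (hca : c ≠ a) : ¬ G.Adj e c := fun hec =>
  hC4 c e <| isInducedC4_of_not_adj hab hbc hec.symm hae.symm hca.symm heb.symm
    (fun hac => htri c hac hbc) (fun hbe => htri e hae hbe)

end

section
variable {V : Type*} [Finite V] {G : SimpleGraph V} {d : ℕ} {a b : V}

lemma adj_of_notMem_neighborSet_union (hcard : Nat.card V = 2 * d + 1) (hreg : RegularDeg G d)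
    (hab : G.Adj a b) (htri : ∀ c, G.Adj a c → ¬ G.Adj b c)
    (hC4 : ∀ c e, ¬ IsInducedC4 G a b c e) {x u : V} (hax : G.Adj a x) (hxb : x ≠ b)
    (hu : u ∉ G.neighborSet a ∪ G.neighborSet b) : G.Adj x u := by
  simp only [Set.mem_union, mem_neighborSet, not_or] at hu
  have hbB : b ∉ G.neighborSet b \ {a} := fun h => G.irrefl h.1
  have hB : (G.neighborSet b \ {a}).ncard + 1 = d :=
    hreg b ▸ Set.ncard_sdiff_singleton_add_one hab.symm
  refine adj_of_card_le_ncard_neighborSet_add_ncard (S := insert b (G.neighborSet b \ {a}))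
    ?_ ?_ ?_ ?_ ?_
  · rintro (rfl | ⟨hbx, -⟩)
    exacts [hxb rfl, htri x hax hbx]
  · rintro y (rfl | ⟨hby, hya⟩)
    exacts [fun hxy => htri x hax hxy.symm,
      not_adj_of_no_triangle_of_no_inducedC4 hab htri hC4 hax hby hxb hya]
  · rw [Set.ncard_insert_of_notMem hbB, hreg x]
    omega
  · rintro (rfl | ⟨hbu, -⟩)
    exacts [hu.1 hab, hu.2 hbu]
  · rintro rfl
    exact hu.1 hax

end

/-- If `d ≥ 3` and `G` is `d`-regular on exactly `2d+1` vertices, then every edge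
of `G` lies in a triangle or in an induced 4-cycle. -/
theorem edge_in_triangle_or_inducedC4_card_two_d_add_one {V : Type*} [Fintype V]
    {d : ℕ} (hd : 3 ≤ d) (G : SimpleGraph V) (hcard : Fintype.card V = 2 * d + 1)
    (hreg : RegularDeg G d) :
    ∀ a b : V, G.Adj a b →
      (∃ c : V, G.Adj a c ∧ G.Adj b c) ∨ (∃ c e : V, IsInducedC4 G a b c e) := by
  intro a b hab
  by_contra! h
  obtain ⟨htri, hC4⟩ := h
  rw [← Nat.card_eq_fintype_card] at hcard
  obtain ⟨u, hu⟩ : ∃ u, u ∉ G.neighborSet a ∪ G.neighborSet b := by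
    by_contra! h
    have := Set.ncard_union_le (G.neighborSet a) (G.neighborSet b)
    rw [Set.eq_univ_of_forall h, Set.ncard_univ, hcard, hreg a, hreg b] at this
    omega
  have hA : G.neighborSet a \ {b} ⊆ G.neighborSet u := fun x ⟨hax, hxb⟩ =>
    (adj_of_notMem_neighborSet_union hcard hreg hab htri hC4 hax hxb hu).symm
  have hB : G.neighborSet b \ {a} ⊆ G.neighborSet u := fun y ⟨hby, hya⟩ =>
    (adj_of_notMem_neighborSet_union hcard hreg hab.symm (fun c hbc hac => htri c hac hbc)
      (fun c e h => hC4 e c h.symm) hby hya (Set.union_comm .. ▸ hu)).symm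
  have hdisj : Disjoint (G.neighborSet a \ {b}) (G.neighborSet b \ {a}) :=
    Set.disjoint_left.2 fun x hxa hxb => htri x hxa.1 hxb.1
  have hle := Set.ncard_le_ncard (Set.union_subset hA hB)
  have hAcard := Set.ncard_sdiff_singleton_add_one (show b ∈ G.neighborSet a from hab)
  have hBcard := Set.ncard_sdiff_singleton_add_one (show a ∈ G.neighborSet b from hab.symm)
  rw [Set.ncard_union_eq hdisj, hreg u] at hle
  rw [hreg a] at hAcard
  rw [hreg b] at hBcard
  omega
end

section
/- Let d ≥ 3, let G be a d-regular fragment, and let ab be an edge of G. Then there exists a graph G' on the same vertex set such that either G' = G or G' is obtained from G by a single Δ-switch, the set of edges incident with b is the same in G and in G', and G' contains a triangle having a as one of its vertices. -/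
open SimpleGraph

/-- Let `G` be a `d`-regular fragment (`d ≥ 3`) and `ab` an edge of `G`.  After at
most one Δ-switch, which leaves all edges at `b` unchanged, there is a triangle
with `a` as one of its vertices. -/
theorem fragment_triangle_at_a_after_one_switch {V : Type*} [Fintype V] {d : ℕ}
    (hd : 3 ≤ d) (G : SimpleGraph V) (hreg : RegularDeg G d)
    (h1 : d + 1 < Fintype.card V) (h2 : Fintype.card V < 2 * (d + 1))
    (a b : V) (hab : G.Adj a b) :
    ∃ G' : SimpleGraph V, (G' = G ∨ DeltaSwitch G G') ∧
      (∀ c : V, G'.Adj b c ↔ G.Adj b c) ∧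
      (∃ p q : V, G'.Adj a p ∧ G'.Adj a q ∧ G'.Adj p q) := by
  classical
  by_cases htri : ∃ p q : V, G.Adj a p ∧ G.Adj a q ∧ G.Adj p q
  · exact ⟨G, Or.inl rfl, fun c => Iff.rfl, htri⟩
  push_neg at htri
  -- htri : ∀ p q, G.Adj a p → G.Adj a q → ¬ G.Adj p q
  have haA : a ∉ G.neighborSet a := fun h => G.irrefl h
  have hAcard : (G.neighborSet a).ncard = d := hreg a
  -- pick two distinct neighbors x, w of a, different from b
  have hdiffcard : ((G.neighborSet a) \ {b}).ncard = d - 1 := by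
    rw [Set.ncard_diff_singleton_of_mem (show b ∈ G.neighborSet a from hab), hAcard]
  have h2lt : 1 < ((G.neighborSet a) \ {b}).ncard := by omega
  obtain ⟨x, w, hx, hw, hxw⟩ := (Set.one_lt_ncard_iff (Set.toFinite _)).mp h2lt
  obtain ⟨hxA, hxb⟩ := hx
  obtain ⟨hwA, hwb⟩ := hw
  have hxb : x ≠ b := hxb
  have hwb : w ≠ b := hwb
  have haxA : G.Adj a x := hxA
  have hawA : G.Adj a w := hwA
  have hnxw : ¬ G.Adj x w := htri x w haxA hawA
  -- the sets X, Z, B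
  set X := G.neighborSet x \ {a} with hXdef
  set Z := G.neighborSet w \ {a} with hZdef
  set B := (Set.univ : Set V) \ insert a (G.neighborSet a) with hBdef
  have hXcard : X.ncard = d - 1 := by
    rw [hXdef, Set.ncard_diff_singleton_of_mem (show a ∈ G.neighborSet x from haxA.symm), hreg x]
  have hZcard : Z.ncard = d - 1 := by
    rw [hZdef, Set.ncard_diff_singleton_of_mem (show a ∈ G.neighborSet w from hawA.symm), hreg w]
  have hBcard : B.ncard = Fintype.card V - (d + 1) := by
    rw [hBdef, Set.ncard_diff (Set.subset_univ _), Set.ncard_univ,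
      Nat.card_eq_fintype_card, Set.ncard_insert_of_notMem haA, hAcard]
  have hXB : X ⊆ B := by
    intro c hc
    obtain ⟨hcx, hca⟩ := hc
    refine ⟨trivial, fun hc' => ?_⟩
    rcases hc' with h | h
    · exact hca h
    · exact htri x c haxA h hcx
  have hZB : Z ⊆ B := by
    intro c hc
    obtain ⟨hcx, hca⟩ := hc
    refine ⟨trivial, fun hc' => ?_⟩
    rcases hc' with h | h
    · exact hca h
    · exact htri w c hawA h hcx
  have hxXZ : x ∉ X ∪ Z := by
    rintro (⟨h, -⟩ | ⟨h, -⟩)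
    · exact G.irrefl h
    · exact hnxw (G.adj_symm h)
  have hwXZ : w ∉ X ∪ Z := by
    rintro (⟨h, -⟩ | ⟨h, -⟩)
    · exact hnxw h
    · exact G.irrefl h
  -- key claim: there are nonadjacent y ∈ X, z ∈ Z
  have key : ∃ y z, y ∈ X ∧ z ∈ Z ∧ y ≠ z ∧ ¬ G.Adj y z := by
    by_contra hcon
    push_neg at hcon
    have hBd : B.ncard ≤ d := by omega
    have hUB : (X ∪ Z).ncard ≤ B.ncard :=
      Set.ncard_le_ncard (Set.union_subset hXB hZB)
    have hint : (X ∩ Z).ncard + (X ∪ Z).ncard = (d - 1) + (d - 1) := by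
      rw [Set.ncard_inter_add_ncard_union, hXcard, hZcard]
    have hne : (X ∩ Z).Nonempty := by
      rw [← Set.ncard_pos]
      omega
    obtain ⟨y0, hy0X, hy0Z⟩ := hne
    -- all of X ∪ Z minus y0, together with x and w, are neighbors of y0
    have hsub : insert x (insert w ((X ∪ Z) \ {y0})) ⊆ G.neighborSet y0 := by
      rintro c (hc | hc | ⟨hc, hcy0⟩)
      · rw [hc]; exact (hy0X.1 : G.Adj x y0).symm
      · rw [hc]; exact (hy0Z.1 : G.Adj w y0).symm
      · rcases hc with hcX | hcZ
        · exact ((hcon c y0 hcX hy0Z hcy0).symm : G.Adj y0 c)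
        · exact (hcon y0 c hy0X hcZ (fun h => hcy0 h.symm) : G.Adj y0 c)
    have hscard : (insert x (insert w ((X ∪ Z) \ {y0}))).ncard
        = (X ∪ Z).ncard - 1 + 1 + 1 := by
      rw [Set.ncard_insert_of_notMem, Set.ncard_insert_of_notMem,
        Set.ncard_diff_singleton_of_mem (Set.mem_union_left _ hy0X)]
      · exact fun h => hwXZ h.1
      · rintro (h | h)
        · exact hxw h
        · exact hxXZ h.1
    have hUd : (X ∪ Z).ncard ≥ 1 := by
      have : ({y0} : Set V).ncard ≤ (X ∪ Z).ncard :=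
        Set.ncard_le_ncard (by simp [Set.mem_union_left _ hy0X])
      simpa using this
    have hdeg : (insert x (insert w ((X ∪ Z) \ {y0}))).ncard ≤ d := by
      rw [← hreg y0]
      exact Set.ncard_le_ncard hsub
    have hUle : (X ∪ Z).ncard ≤ d - 1 := by omega
    -- hence X = Z
    have hXZ : X = Z := by
      have hXI : X ∩ Z = X :=
        Set.eq_of_subset_of_ncard_le Set.inter_subset_left (by omega)
      have hZI : X ∩ Z = Z :=
        Set.eq_of_subset_of_ncard_le Set.inter_subset_right (by omega)
      rw [← hXI, hZI]
    -- rigid structure: each y ∈ X has neighborhood exactly {x, w} ∪ X \ {y}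
    have hNy : ∀ y ∈ X, G.neighborSet y = insert x (insert w (X \ {y})) := by
      intro y hy
      have hyZ : y ∈ Z := hXZ ▸ hy
      have hsub2 : insert x (insert w (X \ {y})) ⊆ G.neighborSet y := by
        rintro c (hc | hc | ⟨hc, hcy⟩)
        · rw [hc]; exact (hy.1 : G.Adj x y).symm
        · rw [hc]; exact (hyZ.1 : G.Adj w y).symm
        · exact ((hcon c y hc hyZ hcy).symm : G.Adj y c)
      have hycard : (insert x (insert w (X \ {y}))).ncard
          = (d - 1) - 1 + 1 + 1 := by
        rw [Set.ncard_insert_of_notMem, Set.ncard_insert_of_notMem,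
          Set.ncard_diff_singleton_of_mem hy, hXcard]
        · exact fun h => hwXZ (Set.mem_union_left _ h.1)
        · rintro (h | h)
          · exact hxw h
          · exact hxXZ (Set.mem_union_left _ h.1)
      exact (Set.eq_of_subset_of_ncard_le hsub2 (by rw [hycard, hreg y]; omega)).symm
    -- but then b has too few possible neighbors
    have hbB : b ∉ B := fun h => h.2 (Set.mem_insert_of_mem _ hab)
    have hNb : G.neighborSet b \ {a} ⊆ B \ X := by
      intro c hc
      obtain ⟨hcb, hca⟩ := hc
      have hcB : c ∈ B := by
        refine ⟨trivial, fun hc' => ?_⟩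
        rcases hc' with h | h
        · exact hca h
        · exact htri b c hab h hcb
      refine ⟨hcB, fun hcX => ?_⟩
      have hbc : b ∈ G.neighborSet c := (hcb : G.Adj b c).symm
      rw [hNy c hcX] at hbc
      rcases hbc with h | h | h
      · exact hxb h.symm
      · exact hwb h.symm
      · exact hbB (hXB h.1)
    have h5 : (G.neighborSet b \ {a}).ncard = d - 1 := by
      rw [Set.ncard_diff_singleton_of_mem (show a ∈ G.neighborSet b from hab.symm), hreg b]
    have h6 : (B \ X).ncard = B.ncard - (d - 1) := by
      rw [Set.ncard_diff hXB, hXcard]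
    have h7 : (G.neighborSet b \ {a}).ncard ≤ (B \ X).ncard :=
      Set.ncard_le_ncard hNb
    omega
  obtain ⟨y, z, hyX, hzZ, hyz, hnyz⟩ := key
  obtain ⟨hyNx, hya⟩ := hyX
  obtain ⟨hzNw, hza⟩ := hzZ
  have hya : y ≠ a := hya
  have hza : z ≠ a := hza
  have hxy : G.Adj x y := hyNx
  have hwz : G.Adj w z := hzNw
  have hby : b ≠ y := fun h => htri x b haxA hab (h ▸ hxy)
  have hbz : b ≠ z := fun h => htri w b hawA hab (h ▸ hwz)
  -- construct the switched graph
  set E' : Set (Sym2 V) := (G.edgeSet \ {s(x, y), s(w, z)}) ∪ {s(x, w), s(y, z)}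
    with hE'
  have hnd : ∀ e ∈ E', ¬ e.IsDiag := by
    rintro e (⟨heG, -⟩ | (rfl | rfl))
    · exact G.not_isDiag_of_mem_edgeSet heG
    · simpa using hxw
    · simpa using hyz
  have hedge : (SimpleGraph.fromEdgeSet E').edgeSet = E' := by
    rw [SimpleGraph.edgeSet_fromEdgeSet]
    exact Set.ext fun e => ⟨fun h => h.1, fun h => ⟨h, hnd e h⟩⟩
  have hadj : ∀ u v : V, (SimpleGraph.fromEdgeSet E').Adj u v ↔
      (s(u, v) ∈ E' ∧ u ≠ v) := fun u v => SimpleGraph.fromEdgeSet_adj E'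
  refine ⟨SimpleGraph.fromEdgeSet E', Or.inr (Or.inl ⟨a, w, x, y, z, ?_,
    haxA, hawA, hxy, hwz, hnxw, hnyz, hedge⟩), ?_, x, w, ?_, ?_, ?_⟩
  · -- pairwise distinctness of a, w, x, y, z
    have haw : a ≠ w := hawA.ne
    have hax : a ≠ x := haxA.ne
    have hwx : w ≠ x := hxw.symm
    have hwy : w ≠ y := fun h => hnxw (G.adj_symm (h ▸ hxy)).symm
    have hwz' : w ≠ z := hwz.ne
    have hxy' : x ≠ y := hxy.ne
    have hxz : x ≠ z := fun h => hnxw (h ▸ hwz).symm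
    simp [List.pairwise_cons, hax, haw, hya.symm, hza.symm, hwx, hwy, hwz',
      hxy', hxz, hyz]
  · -- edges at b unchanged
    intro c
    rw [hadj]
    constructor
    · rintro ⟨(⟨h, -⟩ | h), hbc⟩
      · exact h
      · exfalso
        simp only [Set.mem_insert_iff, Set.mem_singleton_iff, Sym2.eq_iff] at h
        rcases h with (⟨h1, -⟩ | ⟨h1, -⟩) | (⟨h1, -⟩ | ⟨h1, -⟩)
        · exact hxb h1.symm
        · exact hwb h1.symm
        · exact hby h1
        · exact hbz h1
    · intro h
      refine ⟨Or.inl ⟨h, ?_⟩, h.ne⟩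
      intro he
      simp only [Set.mem_insert_iff, Set.mem_singleton_iff, Sym2.eq_iff] at he
      rcases he with (⟨h1, -⟩ | ⟨h1, -⟩) | (⟨h1, -⟩ | ⟨h1, -⟩)
      · exact hxb h1.symm
      · exact hby h1
      · exact hwb h1.symm
      · exact hbz h1
  · -- G'.Adj a x
    rw [hadj]
    refine ⟨Or.inl ⟨hxA, ?_⟩, haxA.ne⟩
    intro he
    simp only [Set.mem_insert_iff, Set.mem_singleton_iff, Sym2.eq_iff] at he
    rcases he with (⟨h1, -⟩ | ⟨h1, -⟩) | (⟨h1, -⟩ | ⟨h1, -⟩)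
    · exact haxA.ne h1
    · exact hya h1.symm
    · exact hawA.ne h1
    · exact hza h1.symm
  · -- G'.Adj a w
    rw [hadj]
    refine ⟨Or.inl ⟨hwA, ?_⟩, hawA.ne⟩
    intro he
    simp only [Set.mem_insert_iff, Set.mem_singleton_iff, Sym2.eq_iff] at he
    rcases he with (⟨h1, -⟩ | ⟨h1, -⟩) | (⟨h1, -⟩ | ⟨h1, -⟩)
    · exact haxA.ne h1
    · exact hya h1.symm
    · exact hawA.ne h1
    · exact hza h1.symm
  · -- G'.Adj x w
    rw [hadj]
    exact ⟨Or.inr (Or.inl rfl), hxw⟩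
end

section
/- Let d ≥ 3 and let n satisfy d+1 < n < 2(d+1). Then any two d-regular graphs on the same vertex set of size n are Δ-switch equivalent; that is, the set of fragments on a fixed vertex set of size n is connected under Δ-switches. -/
open SimpleGraph

section Swap
variable {V : Type*}

/-- Remove edges `pq`, `rs`; add edges `pr`, `qs`. -/
def swapE (G : SimpleGraph V) (p q r s : V) : SimpleGraph V :=
  SimpleGraph.fromEdgeSet ((G.edgeSet \ {s(p,q), s(r,s)}) ∪ {s(p,r), s(q,s)})

lemma swapE_edgeSet (G : SimpleGraph V) {p q r s : V} (hpr : p ≠ r) (hqs : q ≠ s) :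
    (swapE G p q r s).edgeSet = (G.edgeSet \ {s(p,q), s(r,s)}) ∪ {s(p,r), s(q,s)} := by
  rw [swapE, edgeSet_fromEdgeSet]
  ext e
  simp only [Set.mem_diff, Set.mem_union, Set.mem_insert_iff, Set.mem_singleton_iff,
    Set.mem_setOf_eq]
  constructor
  · tauto
  · intro h
    refine ⟨h, ?_⟩
    rcases h with ⟨he, -⟩ | (he | he)
    · exact G.not_isDiag_of_mem_edgeSet he
    · subst he; simp [Sym2.mk_isDiag_iff]; exact hpr
    · subst he; simp [Sym2.mk_isDiag_iff]; exact hqs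

lemma swapE_adj (G : SimpleGraph V) {p q r s : V} (hpr : p ≠ r) (hqs : q ≠ s) (u v : V) :
    (swapE G p q r s).Adj u v ↔
      ((G.Adj u v ∧ s(u,v) ≠ s(p,q) ∧ s(u,v) ≠ s(r,s)) ∨ (s(u,v) = s(p,r) ∨ s(u,v) = s(q,s))) := by
  rw [← mem_edgeSet, swapE_edgeSet G hpr hqs]
  simp only [Set.mem_diff, Set.mem_union, Set.mem_insert_iff, Set.mem_singleton_iff, mem_edgeSet]
  tauto

lemma swapE_comm₁ (G : SimpleGraph V) (p q r s : V) : swapE G p q r s = swapE G q p s r := by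
  unfold swapE
  rw [show s(q,p) = s(p,q) from Sym2.eq_swap, show s(s,r) = s(r,s) from Sym2.eq_swap,
    Set.pair_comm (s(q,s)) (s(p,r))]

lemma swapE_comm₂ (G : SimpleGraph V) (p q r s : V) : swapE G p q r s = swapE G r s p q := by
  unfold swapE
  rw [show s(r,p) = s(p,r) from Sym2.eq_swap, show s(s,q) = s(q,s) from Sym2.eq_swap,
    Set.pair_comm (s(r,s)) (s(p,q))]

lemma swapE_nbr_p (G : SimpleGraph V) {p q r s : V} (hpq : p ≠ q) (hpr : p ≠ r)
    (hps : p ≠ s) (hqs : q ≠ s) :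
    (swapE G p q r s).neighborSet p = insert r (G.neighborSet p \ {q}) := by
  ext v
  simp only [mem_neighborSet, Set.mem_insert_iff, Set.mem_diff, Set.mem_singleton_iff]
  rw [swapE_adj G hpr hqs]
  simp only [Ne, Sym2.eq_iff]
  constructor
  · intro h
    rcases h with ⟨ha, h1, h2⟩ | (h | h) <;> try tauto
  · intro h
    rcases h with rfl | ⟨ha, hv⟩
    · tauto
    · left
      refine ⟨ha, ?_, ?_⟩ <;> tauto

lemma swapE_nbr_other (G : SimpleGraph V) {p q r s u : V} (hpr : p ≠ r) (hqs : q ≠ s)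
    (h1 : u ≠ p) (h2 : u ≠ q) (h3 : u ≠ r) (h4 : u ≠ s) :
    (swapE G p q r s).neighborSet u = G.neighborSet u := by
  ext v
  simp only [mem_neighborSet]
  rw [swapE_adj G hpr hqs]
  simp only [Ne, Sym2.eq_iff]
  constructor
  · intro h; tauto
  · intro ha; left; refine ⟨ha, ?_, ?_⟩ <;> tauto

lemma swapE_ncard [Finite V] (G : SimpleGraph V) {p q r s : V}
    (hpq : p ≠ q) (hpr : p ≠ r) (hps : p ≠ s) (hqr : q ≠ r) (hqs : q ≠ s) (hrs : r ≠ s)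
    (apq : G.Adj p q) (ars : G.Adj r s) (npr : ¬ G.Adj p r) (nqs : ¬ G.Adj q s) (u : V) :
    ((swapE G p q r s).neighborSet u).ncard = (G.neighborSet u).ncard := by
  have key : ∀ (G : SimpleGraph V) (p q r s : V), p ≠ q → p ≠ r → p ≠ s → q ≠ s →
      G.Adj p q → ¬ G.Adj p r →
      ((swapE G p q r s).neighborSet p).ncard = (G.neighborSet p).ncard := by
    intro G p q r s h1 h2 h3 h4 ha hn
    rw [swapE_nbr_p G h1 h2 h3 h4]
    have hr : r ∉ G.neighborSet p \ {q} := by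
      simp only [Set.mem_diff, Set.mem_singleton_iff, mem_neighborSet]
      tauto
    rw [Set.ncard_insert_of_notMem hr,
      Set.ncard_diff_singleton_add_one (by simpa using ha)]
  rcases eq_or_ne u p with rfl | up
  · exact key G u q r s hpq hpr hps hqs apq npr
  rcases eq_or_ne u q with rfl | uq
  · rw [swapE_comm₁]
    exact key G u p s r hpq.symm hqs hqr hpr apq.symm nqs
  rcases eq_or_ne u r with rfl | ur
  · rw [swapE_comm₂]
    exact key G u s p q hrs hpr.symm hqr.symm hqs.symm ars (fun h => npr h.symm)
  rcases eq_or_ne u s with rfl | us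
  · rw [swapE_comm₂, swapE_comm₁]
    exact key G u r q p hrs.symm hqs.symm hps.symm hpr.symm ars.symm (fun h => nqs h.symm)
  · rw [swapE_nbr_other G hpr hqs up uq ur us]

end Swap

section PS
variable {V : Type*}

/-- A plain switch: remove edges `pq`, `rs`, add edges `pr`, `qs`. -/
def PSwitch (G G' : SimpleGraph V) : Prop :=
  ∃ p q r s : V, p ≠ q ∧ p ≠ r ∧ p ≠ s ∧ q ≠ r ∧ q ≠ s ∧ r ≠ s ∧
    G.Adj p q ∧ G.Adj r s ∧ ¬ G.Adj p r ∧ ¬ G.Adj q s ∧ G' = swapE G p q r s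

lemma PSwitch.ncard_nbr [Finite V] {G G' : SimpleGraph V} (h : PSwitch G G') (u : V) :
    (G'.neighborSet u).ncard = (G.neighborSet u).ncard := by
  obtain ⟨p, q, r, s, h1, h2, h3, h4, h5, h6, a1, a2, n1, n2, rfl⟩ := h
  exact swapE_ncard G h1 h2 h3 h4 h5 h6 a1 a2 n1 n2 u

lemma PSwitch.symm {G G' : SimpleGraph V} (h : PSwitch G G') : PSwitch G' G := by
  obtain ⟨p, q, r, s, h1, h2, h3, h4, h5, h6, a1, a2, n1, n2, rfl⟩ := h
  refine ⟨p, r, q, s, h2, h1, h3, h4.symm, h6, h5, ?_, ?_, ?_, ?_, ?_⟩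
  · rw [swapE_adj G h2 h5]; tauto
  · rw [swapE_adj G h2 h5]; tauto
  · rw [swapE_adj G h2 h5]
    rintro (⟨-, hne, -⟩ | h | h)
    · exact hne rfl
    · rw [Sym2.eq_iff] at h; tauto
    · rw [Sym2.eq_iff] at h; tauto
  · rw [swapE_adj G h2 h5]
    rintro (⟨-, -, hne⟩ | h | h)
    · exact hne rfl
    · rw [Sym2.eq_iff] at h; tauto
    · rw [Sym2.eq_iff] at h; tauto
  · apply (SimpleGraph.edgeSet_inj).mp
    rw [swapE_edgeSet _ h1 h6, swapE_edgeSet G h2 h5]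
    have m1 : s(p,q) ∈ G.edgeSet := a1
    have m2 : s(r,s) ∈ G.edgeSet := a2
    have m3 : s(p,r) ∉ G.edgeSet := n1
    have m4 : s(q,s) ∉ G.edgeSet := n2
    ext e
    simp only [Set.mem_union, Set.mem_diff, Set.mem_insert_iff, Set.mem_singleton_iff]
    by_cases e1 : e = s(p,q) <;> by_cases e2 : e = s(r,s) <;>
      by_cases e3 : e = s(p,r) <;> by_cases e4 : e = s(q,s) <;>
      simp_all [Sym2.eq_iff] <;> tauto
end PS

section Counting
variable {V : Type*} [Finite V]

lemma swapE_outside {G : SimpleGraph V} {U : Set V} {p q r s : V}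
    (hp : p ∈ U) (hq : q ∈ U) (hr : r ∈ U) (hs : s ∈ U) (hpr : p ≠ r) (hqs : q ≠ s)
    {u v : V} (h : u ∉ U ∨ v ∉ U) :
    ((swapE G p q r s).Adj u v ↔ G.Adj u v) := by
  rw [swapE_adj G hpr hqs]
  simp only [Ne, Sym2.eq_iff]
  constructor
  · rintro (⟨ha, -⟩ | h' | h')
    · exact ha
    · exfalso; rcases h' with ⟨rfl, rfl⟩ | ⟨rfl, rfl⟩ <;> tauto
    · exfalso; rcases h' with ⟨rfl, rfl⟩ | ⟨rfl, rfl⟩ <;> tauto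
  · intro ha
    left
    refine ⟨ha, ?_, ?_⟩ <;> rintro (⟨rfl, rfl⟩ | ⟨rfl, rfl⟩) <;> tauto

lemma rcard_eq {G H : SimpleGraph V} {U : Set V}
    (hdeg : ∀ u, (G.neighborSet u).ncard = (H.neighborSet u).ncard)
    (hout : ∀ u v, (u ∉ U ∨ v ∉ U) → (G.Adj u v ↔ H.Adj u v)) (u : V) :
    (G.neighborSet u ∩ U).ncard = (H.neighborSet u ∩ U).ncard := by
  have hdiff : G.neighborSet u \ U = H.neighborSet u \ U := by
    ext v
    simp only [Set.mem_diff, mem_neighborSet]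
    constructor
    · rintro ⟨ha, hv⟩; exact ⟨(hout u v (Or.inr hv)).mp ha, hv⟩
    · rintro ⟨ha, hv⟩; exact ⟨(hout u v (Or.inr hv)).mpr ha, hv⟩
  have h1 := Set.ncard_inter_add_ncard_diff_eq_ncard (G.neighborSet u) U
  have h2 := Set.ncard_inter_add_ncard_diff_eq_ncard (H.neighborSet u) U
  rw [hdiff] at h1
  rw [hdeg u] at h1
  omega

lemma switch_partner (G : SimpleGraph V) (U : Set V) {p a b : V}
    (haU : a ∈ U) (hpU : p ∈ U) (hpb : G.Adj p b) (hpa : ¬ G.Adj p a) (hap : a ≠ p)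
    (hge : (G.neighborSet b ∩ U).ncard ≤ (G.neighborSet a ∩ U).ncard) :
    ∃ c, c ∈ U ∧ G.Adj a c ∧ ¬ G.Adj b c ∧ c ≠ p ∧ c ≠ a ∧ c ≠ b := by
  by_contra hno
  push_neg at hno
  set NaU := G.neighborSet a ∩ U with hNaU
  set NbU := G.neighborSet b ∩ U with hNbU
  have hpNa : p ∉ NaU := by
    rintro ⟨hmem, -⟩
    exact hpa hmem.symm
  have key : NaU \ {b} ⊆ NbU := by
    rintro c ⟨⟨hca, hcU⟩, hcb⟩
    simp only [Set.mem_singleton_iff] at hcb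
    have hcp : c ≠ p := by rintro rfl; exact hpNa ⟨hca, hcU⟩
    have hcac : c ≠ a := fun h => G.irrefl (h ▸ hca)
    by_contra hcn
    simp only [hNbU, Set.mem_inter_iff, mem_neighborSet] at hcn
    have hbc : ¬ G.Adj b c := fun h => hcn ⟨h, hcU⟩
    exact hcb (hno c hcU hca hbc hcp hcac)
  have hpNb : p ∈ NbU := ⟨hpb.symm, hpU⟩
  by_cases hb : b ∈ NaU
  · have haNb : a ∈ NbU := ⟨hb.1.symm, haU⟩
    have key2 : NaU \ {b} ⊆ NbU \ {p, a} := by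
      rintro c ⟨hc, hcb⟩
      refine ⟨key ⟨hc, hcb⟩, ?_⟩
      simp only [Set.mem_insert_iff, Set.mem_singleton_iff]
      push_neg
      exact ⟨by rintro rfl; exact hpNa hc, by rintro rfl; exact G.irrefl hc.1⟩
    have hc1 : (NaU \ {b}).ncard = NaU.ncard - 1 := Set.ncard_diff_singleton_of_mem hb
    have hsub : ({p, a} : Set V) ⊆ NbU := by
      rintro x (rfl | rfl)
      · exact hpNb
      · exact haNb
    have hc2 : (NbU \ {p, a}).ncard = NbU.ncard - 2 := by
      rw [Set.ncard_diff hsub, Set.ncard_pair (Ne.symm hap)]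
    have hc3 : 2 ≤ NbU.ncard := by
      have := Set.ncard_le_ncard hsub (Set.toFinite _)
      rwa [Set.ncard_pair (Ne.symm hap)] at this
    have hc4 : 1 ≤ NaU.ncard := by
      have : ({b} : Set V) ⊆ NaU := by rintro x rfl; exact hb
      have := Set.ncard_le_ncard this (Set.toFinite _)
      simpa using this
    have := Set.ncard_le_ncard key2 (Set.toFinite _)
    omega
  · have key3 : NaU ⊆ NbU \ {p} := by
      intro c hc
      have hcb : c ≠ b := by rintro rfl; exact hb hc
      refine ⟨key ⟨hc, hcb⟩, ?_⟩
      simp only [Set.mem_singleton_iff]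
      rintro rfl; exact hpNa hc
    have hc2 : (NbU \ {p}).ncard = NbU.ncard - 1 := Set.ncard_diff_singleton_of_mem hpNb
    have hc3 : 1 ≤ NbU.ncard := by
      have : ({p} : Set V) ⊆ NbU := by rintro x rfl; exact hpNb
      have := Set.ncard_le_ncard this (Set.toFinite _)
      simpa using this
    have := Set.ncard_le_ncard key3 (Set.toFinite _)
    omega

lemma exists_topset (s : Set V) (f : V → ℕ) :
    ∀ k, k ≤ s.ncard → ∃ T, T ⊆ s ∧ T.ncard = k ∧ ∀ a ∈ T, ∀ b ∈ s \ T, f b ≤ f a := by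
  intro k
  induction k with
  | zero => exact fun _ => ⟨∅, Set.empty_subset s, Set.ncard_empty V, by simp⟩
  | succ k ih =>
    intro hk
    obtain ⟨T, hTs, hTk, hmax⟩ := ih (Nat.le_of_succ_le hk)
    have hne : (s \ T).Nonempty := by
      apply Set.nonempty_of_ncard_ne_zero
      rw [Set.ncard_diff hTs]
      omega
    obtain ⟨b0, hb0, hb0max⟩ := Set.exists_max_image (s \ T) f (Set.toFinite _) hne
    refine ⟨insert b0 T, ?_, ?_, ?_⟩
    · exact Set.insert_subset hb0.1 hTs
    · rw [Set.ncard_insert_of_notMem hb0.2, hTk]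
    · rintro a ha b hb
      have hbT : b ∈ s \ T := ⟨hb.1, fun hbmem => hb.2 (Set.mem_insert_of_mem _ hbmem)⟩
      rcases ha with rfl | ha
      · exact hb0max b hbT
      · exact hmax a ha b hbT

end Counting

section Phase
variable {V : Type*} [Finite V]

lemma phase (H : SimpleGraph V) (U : Set V) (p : V) (Target : Set V)
    (hTU : Target ⊆ U) (hTp : p ∉ Target) (hpU : p ∈ U)
    (hTcard : Target.ncard = (H.neighborSet p ∩ U).ncard)
    (hTmax : ∀ a ∈ Target, ∀ b, b ∈ U → b ≠ p → b ∉ Target →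
      (H.neighborSet b ∩ U).ncard ≤ (H.neighborSet a ∩ U).ncard) :
    ∀ m (G : SimpleGraph V),
      (∀ u, (G.neighborSet u).ncard = (H.neighborSet u).ncard) →
      (∀ u v, (u ∉ U ∨ v ∉ U) → (G.Adj u v ↔ H.Adj u v)) →
      (Target \ G.neighborSet p).ncard = m →
      ∃ G', Relation.ReflTransGen PSwitch G G' ∧
        (∀ u, (G'.neighborSet u).ncard = (H.neighborSet u).ncard) ∧
        (∀ u v, (u ∉ U ∨ v ∉ U) → (G'.Adj u v ↔ H.Adj u v)) ∧
        G'.neighborSet p ∩ U = Target := by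
  intro m
  induction m using Nat.strong_induction_on with
  | _ m ih =>
    intro G hdeg hout hm
    have hrG : ∀ u, (G.neighborSet u ∩ U).ncard = (H.neighborSet u ∩ U).ncard :=
      rcard_eq hdeg hout
    rcases Nat.eq_zero_or_pos m with rfl | hmpos
    · -- Target ⊆ N_G p, so equality
      have hsub : Target ⊆ G.neighborSet p := by
        rw [Set.ncard_eq_zero (Set.toFinite _)] at hm
        exact Set.diff_eq_empty.mp hm
      have hsub2 : Target ⊆ G.neighborSet p ∩ U := fun x hx => ⟨hsub hx, hTU hx⟩
      have heq : Target = G.neighborSet p ∩ U := by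
        apply Set.eq_of_subset_of_ncard_le hsub2
        rw [hrG p, ← hTcard]
      exact ⟨G, Relation.ReflTransGen.refl, hdeg, hout, heq.symm⟩
    · -- find a, b, c and switch
      have haex : (Target \ G.neighborSet p).Nonempty :=
        Set.nonempty_of_ncard_ne_zero (by omega)
      obtain ⟨a, haT, haN⟩ := haex
      have hbex : ((G.neighborSet p ∩ U) \ Target).Nonempty := by
        rcases Set.eq_empty_or_nonempty ((G.neighborSet p ∩ U) \ Target) with he | hne
        · exfalso
          have hsub : G.neighborSet p ∩ U ⊆ Target := Set.diff_eq_empty.mp he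
          have : Target = G.neighborSet p ∩ U := by
            apply (Set.eq_of_subset_of_ncard_le hsub _).symm
            rw [hrG p, ← hTcard]
          rw [this] at haT
          exact haN haT.1
        · exact hne
      obtain ⟨b, ⟨hbN, hbU⟩, hbT⟩ := hbex
      have haU : a ∈ U := hTU haT
      have hap : a ≠ p := fun h => hTp (h ▸ haT)
      have hpa : ¬ G.Adj p a := fun h => haN h
      have hpb : G.Adj p b := hbN
      have hbp : b ≠ p := fun h => G.irrefl (h ▸ hbN)
      have hab : a ≠ b := fun h => hbT (h ▸ haT)
      have hge : (G.neighborSet b ∩ U).ncard ≤ (G.neighborSet a ∩ U).ncard := by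
        rw [hrG a, hrG b]
        exact hTmax a haT b hbU hbp hbT
      obtain ⟨c, hcU, hac, hbc, hcp, hca, hcb⟩ := switch_partner G U haU hpU hpb hpa hap hge
      set G2 := swapE G p b a c with hG2
      have hpc : p ≠ c := Ne.symm hcp
      have hpane : p ≠ a := Ne.symm hap
      have hpbne : p ≠ b := Ne.symm hbp
      have hbane : b ≠ a := Ne.symm hab
      have hbcne : b ≠ c := Ne.symm hcb
      have hacne : a ≠ c := Ne.symm hca
      have hps : PSwitch G G2 :=
        ⟨p, b, a, c, hpbne, hpane, hpc, hbane, hbcne, hacne, hpb, hac, hpa, hbc, rfl⟩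
      have hdeg2 : ∀ u, (G2.neighborSet u).ncard = (H.neighborSet u).ncard :=
        fun u => (hps.ncard_nbr u).trans (hdeg u)
      have hout2 : ∀ u v, (u ∉ U ∨ v ∉ U) → (G2.Adj u v ↔ H.Adj u v) := by
        intro u v h
        rw [hG2, swapE_outside hpU hbU haU hcU hpane hbcne h]
        exact hout u v h
      have hnbr2 : G2.neighborSet p = insert a (G.neighborSet p \ {b}) :=
        swapE_nbr_p G hpbne hpane hpc hbcne
      have hmeas : (Target \ G2.neighborSet p).ncard = m - 1 := by
        have hset : Target \ G2.neighborSet p = (Target \ G.neighborSet p) \ {a} := by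
          rw [hnbr2]
          ext v
          simp only [Set.mem_diff, Set.mem_insert_iff, Set.mem_singleton_iff, mem_neighborSet]
          constructor
          · rintro ⟨hv, hlike⟩
            push_neg at hlike
            exact ⟨⟨hv, fun h => hbT (hlike.2 h ▸ hv)⟩, hlike.1⟩
          · rintro ⟨⟨hv, hnadj⟩, hva⟩
            refine ⟨hv, ?_⟩
            push_neg
            exact ⟨hva, fun h => absurd h hnadj⟩
        rw [hset, Set.ncard_diff_singleton_of_mem ((Set.mem_diff _).mpr ⟨haT, haN⟩), hm]
      obtain ⟨G', hrtg, hd', ho', heq'⟩ :=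
        ih (m - 1) (by omega) G2 hdeg2 hout2 hmeas
      exact ⟨G', Relation.ReflTransGen.head hps hrtg, hd', ho', heq'⟩

end Phase

section Connect
variable {V : Type*} [Finite V]

lemma plain_connect_aux :
    ∀ (m : ℕ) (U : Set V), U.ncard = m → ∀ G H : SimpleGraph V,
      (∀ u, (G.neighborSet u).ncard = (H.neighborSet u).ncard) →
      (∀ u v, (u ∉ U ∨ v ∉ U) → (G.Adj u v ↔ H.Adj u v)) →
      Relation.ReflTransGen PSwitch G H := by
  intro m
  induction m using Nat.strong_induction_on with
  | _ m ih =>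
    intro U hU G H hdeg hout
    rcases Nat.eq_zero_or_pos m with rfl | hmpos
    · have hUe : U = ∅ := by rwa [Set.ncard_eq_zero (Set.toFinite _)] at hU
      have : G = H := by
        ext u v
        exact hout u v (Or.inl (by simp [hUe]))
      rw [this]
    · obtain ⟨p, hpU⟩ := Set.nonempty_of_ncard_ne_zero (by omega : U.ncard ≠ 0)
      set rf : V → ℕ := fun u => (H.neighborSet u ∩ U).ncard with hrf
      have hksub : H.neighborSet p ∩ U ⊆ U \ {p} := by
        rintro v ⟨hv, hvU⟩
        exact ⟨hvU, by simpa using (H.ne_of_adj hv).symm⟩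
      have hkle : rf p ≤ (U \ {p}).ncard := Set.ncard_le_ncard hksub (Set.toFinite _)
      obtain ⟨T, hTsub, hTcard, hTmax⟩ := exists_topset (U \ {p}) rf (rf p) hkle
      have hTU : T ⊆ U := fun x hx => (hTsub hx).1
      have hTp : p ∉ T := fun hx => (hTsub hx).2 rfl
      have hTmax' : ∀ a ∈ T, ∀ b, b ∈ U → b ≠ p → b ∉ T →
          (H.neighborSet b ∩ U).ncard ≤ (H.neighborSet a ∩ U).ncard := by
        intro a ha b hbU hbp hbT
        exact hTmax a ha b ⟨⟨hbU, by simpa using hbp⟩, hbT⟩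
      obtain ⟨G', hG1, hGdeg', hGout', hGeq'⟩ :=
        phase H U p T hTU hTp hpU hTcard hTmax' _ G hdeg hout rfl
      obtain ⟨H', hH1, hHdeg', hHout', hHeq'⟩ :=
        phase H U p T hTU hTp hpU hTcard hTmax' _ H (fun _ => rfl) (fun _ _ _ => Iff.rfl) rfl
      have hdeg2 : ∀ u, (G'.neighborSet u).ncard = (H'.neighborSet u).ncard :=
        fun u => (hGdeg' u).trans (hHdeg' u).symm
      have hpadj : ∀ w, w ∈ U → (G'.Adj p w ↔ H'.Adj p w) := by
        intro w hw
        constructor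
        · intro h
          have : w ∈ G'.neighborSet p ∩ U := ⟨h, hw⟩
          rw [hGeq'] at this
          have : w ∈ H'.neighborSet p ∩ U := by rw [hHeq']; exact this
          exact this.1
        · intro h
          have : w ∈ H'.neighborSet p ∩ U := ⟨h, hw⟩
          rw [hHeq'] at this
          have : w ∈ G'.neighborSet p ∩ U := by rw [hGeq']; exact this
          exact this.1
      have hout2 : ∀ u v, (u ∉ U \ {p} ∨ v ∉ U \ {p}) → (G'.Adj u v ↔ H'.Adj u v) := by
        intro u v h
        by_cases hu : u ∈ U
        · by_cases hv : v ∈ U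
          · -- u = p or v = p
            have hcase : u = p ∨ v = p := by
              rcases h with h | h
              · left; by_contra hne; exact h ⟨hu, by simpa using hne⟩
              · right; by_contra hne; exact h ⟨hv, by simpa using hne⟩
            rcases hcase with rfl | rfl
            · exact hpadj v hv
            · rw [G'.adj_comm, H'.adj_comm]
              exact hpadj u hu
          · rw [hGout' u v (Or.inr hv), hHout' u v (Or.inr hv)]
        · rw [hGout' u v (Or.inl hu), hHout' u v (Or.inl hu)]
      have hU' : (U \ {p}).ncard = m - 1 := by
        rw [Set.ncard_diff_singleton_of_mem hpU, hU]
      have hmid : Relation.ReflTransGen PSwitch G' H' :=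
        ih (m - 1) (by omega) (U \ {p}) hU' G' H' hdeg2 hout2
      have hback : Relation.ReflTransGen PSwitch H' H :=
        (@Relation.ReflTransGen.symmetric _ _ ⟨fun _ _ h => PSwitch.symm h⟩).symm _ _ hH1
      exact (hG1.trans hmid).trans hback

lemma plain_connect (G H : SimpleGraph V)
    (hdeg : ∀ u, (G.neighborSet u).ncard = (H.neighborSet u).ncard) :
    Relation.ReflTransGen PSwitch G H :=
  plain_connect_aux (Set.univ : Set V).ncard Set.univ rfl G H hdeg
    (fun u v h => by rcases h with h | h <;> simp at h)

end Connect

section Delta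
variable {V : Type*}

lemma pairwise_five {v w x y z : V} (h1 : v ≠ w) (h2 : v ≠ x) (h3 : v ≠ y) (h4 : v ≠ z)
    (h5 : w ≠ x) (h6 : w ≠ y) (h7 : w ≠ z) (h8 : x ≠ y) (h9 : x ≠ z) (h10 : y ≠ z) :
    List.Pairwise (· ≠ ·) [v, w, x, y, z] := by
  simp only [List.pairwise_cons, List.mem_cons, List.mem_singleton, List.not_mem_nil]
  constructor
  · rintro a (rfl | rfl | rfl | rfl | h0) <;> first | assumption | exact (h0 : False).elim
  constructor
  · rintro a (rfl | rfl | rfl | h0) <;> first | assumption | exact (h0 : False).elim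
  constructor
  · rintro a (rfl | rfl | h0) <;> first | assumption | exact (h0 : False).elim
  constructor
  · rintro a (rfl | h0) <;> first | assumption | exact (h0 : False).elim
  simp

lemma deltaPlus_swap (G : SimpleGraph V) {v w x y z : V}
    (h1 : v ≠ w) (h2 : v ≠ x) (h3 : v ≠ y) (h4 : v ≠ z) (h5 : w ≠ x) (h6 : w ≠ y) (h7 : w ≠ z)
    (h8 : x ≠ y) (h9 : x ≠ z) (h10 : y ≠ z)
    (a1 : G.Adj v x) (a2 : G.Adj v w) (a3 : G.Adj x y) (a4 : G.Adj w z)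
    (n1 : ¬ G.Adj x w) (n2 : ¬ G.Adj y z) :
    DeltaSwitch G (swapE G x y w z) :=
  Or.inl ⟨v, w, x, y, z, pairwise_five h1 h2 h3 h4 h5 h6 h7 h8 h9 h10,
    a1, a2, a3, a4, n1, n2, swapE_edgeSet G h5.symm h10⟩

lemma deltaMinus_swap (G : SimpleGraph V) {v w x y z : V}
    (h1 : v ≠ w) (h2 : v ≠ x) (h3 : v ≠ y) (h4 : v ≠ z) (h5 : w ≠ x) (h6 : w ≠ y) (h7 : w ≠ z)
    (h8 : x ≠ y) (h9 : x ≠ z) (h10 : y ≠ z)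
    (a1 : G.Adj v x) (a2 : G.Adj v w) (a3 : G.Adj x w) (a4 : G.Adj y z)
    (n1 : ¬ G.Adj x y) (n2 : ¬ G.Adj w z) :
    DeltaSwitch G (swapE G x w y z) :=
  Or.inr ⟨v, w, x, y, z, pairwise_five h1 h2 h3 h4 h5 h6 h7 h8 h9 h10,
    a1, a2, a3, a4, n1, n2, swapE_edgeSet G h8 h7⟩

lemma common_nbr [Finite V] {d : ℕ} (hd : 3 ≤ d) (hcard : Nat.card V ≤ 2*d+1)
    (G : SimpleGraph V) (hreg : ∀ u, (G.neighborSet u).ncard = d)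
    {x y : V} (hne : x ≠ y) (hxy : ¬ G.Adj x y) : ∃ v, G.Adj x v ∧ G.Adj y v := by
  by_contra hno
  push_neg at hno
  have hdisj : Disjoint (G.neighborSet x) (G.neighborSet y) := by
    rw [Set.disjoint_left]
    rintro v hvx hvy
    exact hno v hvx hvy
  have hsub : G.neighborSet x ∪ G.neighborSet y ⊆ Set.univ \ {x, y} := by
    rintro v (hv | hv)
    · refine ⟨trivial, ?_⟩
      simp only [Set.mem_insert_iff, Set.mem_singleton_iff]
      push_neg
      exact ⟨fun h => G.irrefl (h ▸ hv), fun h => hxy (h ▸ hv)⟩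
    · refine ⟨trivial, ?_⟩
      simp only [Set.mem_insert_iff, Set.mem_singleton_iff]
      push_neg
      exact ⟨fun h => hxy (h ▸ hv).symm, fun h => G.irrefl (h ▸ hv)⟩
  have h1 : (G.neighborSet x ∪ G.neighborSet y).ncard = 2*d := by
    rw [Set.ncard_union_eq hdisj, hreg x, hreg y]; ring
  have h2 : (Set.univ \ ({x, y} : Set V)).ncard = Nat.card V - 2 := by
    rw [Set.ncard_diff (Set.subset_univ _), Set.ncard_pair hne, Set.ncard_univ]
  have h3 : 2 ≤ Nat.card V := by
    have : ({x, y} : Set V).ncard ≤ (Set.univ : Set V).ncard :=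
      Set.ncard_le_ncard (Set.subset_univ _) (Set.toFinite _)
    rwa [Set.ncard_pair hne, Set.ncard_univ] at this
  have h4 := Set.ncard_le_ncard hsub (Set.toFinite _)
  omega

end Delta

lemma setswap2 {α : Type*} (E : Set α) (x1 x2 x3 x4 x5 x6 : α)
    (m1 : x1 ∈ E) (m2 : x2 ∈ E) (m5 : x5 ∈ E) (m6 : x6 ∈ E) (m3 : x3 ∉ E) (m4 : x4 ∉ E)
    (d12 : x1≠x2) (d13 : x1≠x3) (d14 : x1≠x4) (d15 : x1≠x5) (d16 : x1≠x6)
    (d23 : x2≠x3) (d24 : x2≠x4) (d25 : x2≠x5) (d26 : x2≠x6)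
    (d34 : x3≠x4) (d35 : x3≠x5) (d36 : x3≠x6) (d45 : x4≠x5) (d46 : x4≠x6) (d56 : x5≠x6) :
    ((E \ {x1, x2} ∪ {x3, x4}) \ {x5, x6} ∪ {x1, x2}) = E \ {x5, x6} ∪ {x3, x4} := by
  ext z
  simp only [Set.mem_union, Set.mem_diff, Set.mem_insert_iff, Set.mem_singleton_iff]
  by_cases h1 : z = x1 <;> by_cases h2 : z = x2 <;> by_cases h3 : z = x3 <;>
    by_cases h4 : z = x4 <;> by_cases h5 : z = x5 <;> by_cases h6 : z = x6 <;>
    simp_all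

set_option maxHeartbeats 3200000 in
lemma setswap3 {α : Type*} (E : Set α) (x1 x2 x3 x4 x5 x6 x7 x8 : α)
    (m1 : x1 ∈ E) (m2 : x2 ∈ E) (m5 : x5 ∈ E) (m8 : x8 ∈ E)
    (m3 : x3 ∉ E) (m4 : x4 ∉ E) (m6 : x6 ∉ E) (m7 : x7 ∉ E)
    (d12 : x1≠x2) (d13 : x1≠x3) (d14 : x1≠x4) (d15 : x1≠x5) (d16 : x1≠x6) (d17 : x1≠x7) (d18 : x1≠x8)
    (d23 : x2≠x3) (d24 : x2≠x4) (d25 : x2≠x5) (d26 : x2≠x6) (d27 : x2≠x7) (d28 : x2≠x8)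
    (d34 : x3≠x4) (d35 : x3≠x5) (d36 : x3≠x6) (d37 : x3≠x7) (d38 : x3≠x8)
    (d45 : x4≠x5) (d46 : x4≠x6) (d47 : x4≠x7) (d48 : x4≠x8)
    (d56 : x5≠x6) (d57 : x5≠x7) (d58 : x5≠x8)
    (d67 : x6≠x7) (d68 : x6≠x8) (d78 : x7≠x8) :
    (((E \ {x1, x2} ∪ {x3, x4}) \ {x5, x4} ∪ {x7, x6}) \ {x7, x8} ∪ {x1, x2}) =
      E \ {x5, x8} ∪ {x6, x3} := by
  ext z
  simp only [Set.mem_union, Set.mem_diff, Set.mem_insert_iff, Set.mem_singleton_iff]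
  by_cases h1 : z = x1 <;> by_cases h2 : z = x2 <;> by_cases h3 : z = x3 <;>
    by_cases h4 : z = x4 <;> by_cases h5 : z = x5 <;> by_cases h6 : z = x6 <;>
    by_cases h7 : z = x7 <;> by_cases h8 : z = x8 <;>
    simp_all


lemma setswap1 {α : Type*} (E : Set α) (x1 x2 x3 x4 x5 x6 : α)
    (m1 : x1 ∈ E) (m2 : x2 ∈ E) (m5 : x5 ∈ E) (m3 : x3 ∉ E) (m4 : x4 ∉ E) (m6 : x6 ∉ E)
    (d12 : x1≠x2) (d13 : x1≠x3) (d14 : x1≠x4) (d15 : x1≠x5) (d16 : x1≠x6)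
    (d23 : x2≠x3) (d24 : x2≠x4) (d25 : x2≠x5) (d26 : x2≠x6)
    (d34 : x3≠x4) (d35 : x3≠x5) (d36 : x3≠x6) (d45 : x4≠x5) (d46 : x4≠x6) (d56 : x5≠x6) :
    ((E \ {x1, x2} ∪ {x3, x4}) \ {x5, x4} ∪ {x1, x6}) = E \ {x5, x2} ∪ {x3, x6} := by
  ext z
  simp only [Set.mem_union, Set.mem_diff, Set.mem_insert_iff, Set.mem_singleton_iff]
  by_cases h1 : z = x1 <;> by_cases h2 : z = x2 <;> by_cases h3 : z = x3 <;>
    by_cases h4 : z = x4 <;> by_cases h5 : z = x5 <;> by_cases h6 : z = x6 <;>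
    simp_all


section Simulate
variable {V : Type*} [Finite V]

set_option maxHeartbeats 2000000 in
lemma simulate3 {d : ℕ} (hd : 3 ≤ d) (hcard : Nat.card V ≤ 2*d+1)
    (G : SimpleGraph V) (hreg : ∀ u, (G.neighborSet u).ncard = d)
    {a b c e : V}
    (nab : a ≠ b) (nac : a ≠ c) (nae : a ≠ e) (nbc : b ≠ c) (nbe : b ≠ e) (nce : c ≠ e)
    (hab : G.Adj a b) (hce : G.Adj c e) (hac : ¬ G.Adj a c) (hbe : ¬ G.Adj b e)
    (hbc : G.Adj b c)
    (hnc1 : ∀ v, G.Adj a v → G.Adj c v → v = b ∨ v = e)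
    (hnc2 : ∀ v, G.Adj b v → G.Adj e v → v = a ∨ v = c) :
    DeltaEquiv G (swapE G a b c e) := by
  have hba := hab.symm
  have hec := hce.symm
  have hcb := hbc.symm
  have hca : ¬ G.Adj c a := fun h => hac h.symm
  have heb : ¬ G.Adj e b := fun h => hbe h.symm
  have nba := nab.symm
  have nca := nac.symm
  have nea := nae.symm
  have ncb := nbc.symm
  have neb := nbe.symm
  have nec := nce.symm
  by_cases h3a : ∃ y, G.Adj a y ∧ ¬ G.Adj e y ∧ y ≠ b ∧ y ≠ c ∧ y ≠ e
  · obtain ⟨y, hay, hey, nyb, nyc, nye⟩ := h3a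
    have nya : y ≠ a := (G.ne_of_adj hay).symm
    have nay := nya.symm
    have nby := nyb.symm
    have ncy := nyc.symm
    have ney := nye.symm
    have hya := hay.symm
    have hye : ¬ G.Adj y e := fun h => hey h.symm
    set G1 := swapE G a y c e with hG1
    have st1 : DeltaSwitch G G1 :=
      deltaPlus_swap G nbc nba nby nbe nca ncy nce nay nae nye
        hba hbc hay hce hac hye
    have A1 : G1.Adj c a := by
      rw [hG1, swapE_adj G nac nye]
      right; left; rw [Sym2.eq_iff]; tauto
    have A2 : G1.Adj c b := by
      rw [hG1, swapE_adj G nac nye]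
      left
      refine ⟨hcb, ?_, ?_⟩ <;> (simp only [Ne, Sym2.eq_iff]; tauto)
    have A3 : G1.Adj a b := by
      rw [hG1, swapE_adj G nac nye]
      left
      refine ⟨hab, ?_, ?_⟩ <;> (simp only [Ne, Sym2.eq_iff]; tauto)
    have A4 : G1.Adj y e := by
      rw [hG1, swapE_adj G nac nye]
      right; right; rw [Sym2.eq_iff]; tauto
    have N1 : ¬ G1.Adj a y := by
      rw [hG1, swapE_adj G nac nye]
      rintro (⟨-, h, -⟩ | h | h)
      · exact h rfl
      · rw [Sym2.eq_iff] at h; tauto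
      · rw [Sym2.eq_iff] at h; tauto
    have N2 : ¬ G1.Adj b e := by
      rw [hG1, swapE_adj G nac nye]
      rintro (⟨h, -⟩ | h | h)
      · exact hbe h
      · rw [Sym2.eq_iff] at h; tauto
      · rw [Sym2.eq_iff] at h; tauto
    have st2 : DeltaSwitch G1 (swapE G1 a b y e) :=
      deltaMinus_swap G1 ncb nca ncy nce nba nby nbe nay nae nye A1 A2 A3 A4 N1 N2
    have heq : swapE G1 a b y e = swapE G a b c e := by
      apply SimpleGraph.edgeSet_inj.mp
      rw [swapE_edgeSet G1 nay nbe, hG1, swapE_edgeSet G nac nye, swapE_edgeSet G nac nbe]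
      refine setswap1 G.edgeSet s(a,y) s(c,e) s(a,c) s(y,e) s(a,b) s(b,e)
        (G.mem_edgeSet.mpr hay) (G.mem_edgeSet.mpr hce) (G.mem_edgeSet.mpr hab)
        (fun h => hac (G.mem_edgeSet.mp h)) (fun h => hye (G.mem_edgeSet.mp h))
        (fun h => hbe (G.mem_edgeSet.mp h))
        ?_ ?_ ?_ ?_ ?_ ?_ ?_ ?_ ?_ ?_ ?_ ?_ ?_ ?_ ?_ <;>
        (simp only [Ne, Sym2.eq_iff]; tauto)
    exact Relation.ReflTransGen.head st1 (Relation.ReflTransGen.single (heq ▸ st2))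
  · push_neg at h3a
    have h3a' : ∀ y, G.Adj a y → y ≠ b → y ≠ c → y ≠ e → G.Adj e y := by
      intro y h1 h2 h3 h4
      by_contra hne
      exact h4 (h3a y h1 hne h2 h3)
    by_cases hae : G.Adj a e
    · -- case 3b
      have hαex : (G.neighborSet a \ {b, e}).Nonempty := by
        apply Set.nonempty_of_ncard_ne_zero
        intro h0
        have hsub : G.neighborSet a ⊆ (G.neighborSet a \ {b, e}) ∪ {b, e} := by
          intro v hv
          by_cases hvb : v ∈ ({b, e} : Set V)
          · exact Or.inr hvb
          · exact Or.inl ⟨hv, hvb⟩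
        have hle := Set.ncard_le_ncard hsub (Set.toFinite _)
        have hub := Set.ncard_union_le (G.neighborSet a \ {b, e}) ({b, e} : Set V)
        have hpair : ({b, e} : Set V).ncard = 2 := Set.ncard_pair nbe
        rw [hreg a] at hle
        omega
      obtain ⟨α, hαa, hαbe⟩ := hαex
      simp only [Set.mem_insert_iff, Set.mem_singleton_iff] at hαbe
      push_neg at hαbe
      obtain ⟨nαb, nαe⟩ := hαbe
      have haα : G.Adj a α := hαa
      have nαa : α ≠ a := (G.ne_of_adj haα).symm
      have nαc : α ≠ c := by rintro rfl; exact hac haα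
      have heα : G.Adj e α := h3a' α haα nαb nαc nαe
      have hαe := heα.symm
      have hαa' := haα.symm
      have hea := hae.symm
      set G1 := swapE G a e c b with hG1
      have st1 : DeltaSwitch G G1 :=
        deltaMinus_swap G nαe nαa nαc nαb nea nec neb nac nab ncb
          hαa' hαe hae hcb hac heb
      have A1 : G1.Adj α a := by
        rw [hG1, swapE_adj G nac neb]
        left
        refine ⟨hαa', ?_, ?_⟩ <;> (simp only [Ne, Sym2.eq_iff]; tauto)
      have A2 : G1.Adj α e := by
        rw [hG1, swapE_adj G nac neb]
        left
        refine ⟨hαe, ?_, ?_⟩ <;> (simp only [Ne, Sym2.eq_iff]; tauto)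
      have A3 : G1.Adj a b := by
        rw [hG1, swapE_adj G nac neb]
        left
        refine ⟨hab, ?_, ?_⟩ <;> (simp only [Ne, Sym2.eq_iff]; tauto)
      have A4 : G1.Adj e c := by
        rw [hG1, swapE_adj G nac neb]
        left
        refine ⟨hec, ?_, ?_⟩ <;> (simp only [Ne, Sym2.eq_iff]; tauto)
      have N1 : ¬ G1.Adj a e := by
        rw [hG1, swapE_adj G nac neb]
        rintro (⟨-, h, -⟩ | h | h)
        · exact h rfl
        · rw [Sym2.eq_iff] at h; tauto
        · rw [Sym2.eq_iff] at h; tauto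
      have N2 : ¬ G1.Adj b c := by
        rw [hG1, swapE_adj G nac neb]
        rintro (⟨-, -, h⟩ | h | h)
        · exact h (by rw [Sym2.eq_iff]; tauto)
        · rw [Sym2.eq_iff] at h; tauto
        · rw [Sym2.eq_iff] at h; tauto
      have st2 : DeltaSwitch G1 (swapE G1 a b e c) :=
        deltaPlus_swap G1 nαe nαa nαb nαc nea neb nec nab nac nbc
          A1 A2 A3 A4 N1 N2
      have heq : swapE G1 a b e c = swapE G a b c e := by
        apply SimpleGraph.edgeSet_inj.mp
        rw [swapE_edgeSet G1 nae nbc, hG1, swapE_edgeSet G nac neb, swapE_edgeSet G nac nbe,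
          show s(e,c) = s(c,e) from Sym2.eq_swap, show s(c,b) = s(b,c) from Sym2.eq_swap,
          show s(e,b) = s(b,e) from Sym2.eq_swap]
        refine setswap2 G.edgeSet s(a,e) s(b,c) s(a,c) s(b,e) s(a,b) s(c,e)
          (G.mem_edgeSet.mpr hae) (G.mem_edgeSet.mpr hbc) (G.mem_edgeSet.mpr hab)
          (G.mem_edgeSet.mpr hce)
          (fun h => hac (G.mem_edgeSet.mp h)) (fun h => hbe (G.mem_edgeSet.mp h))
          ?_ ?_ ?_ ?_ ?_ ?_ ?_ ?_ ?_ ?_ ?_ ?_ ?_ ?_ ?_ <;>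
          (simp only [Ne, Sym2.eq_iff]; tauto)
      exact Relation.ReflTransGen.head st1 (Relation.ReflTransGen.single (heq ▸ st2))
    ·
      -- case 3c : ¬ Adj a e
      set S : Set V := G.neighborSet a \ {b} with hSdef
      have hbNa : b ∈ G.neighborSet a := hab
      have hScard : S.ncard = d - 1 := by
        rw [hSdef, Set.ncard_diff_singleton_of_mem hbNa, hreg a]
      have hSmem : ∀ y ∈ S, G.Adj a y ∧ y ≠ b := fun y hy => ⟨hy.1, by simpa using hy.2⟩
      have hSsubNe : S ⊆ G.neighborSet e := by
        intro y hy
        obtain ⟨hya, hyb⟩ := hSmem y hy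
        have hyc : y ≠ c := by rintro rfl; exact hac hya
        have hye : y ≠ e := by rintro rfl; exact hae hya
        exact h3a' y hya hyb hyc hye
      have hcS : c ∉ S := fun h => hac (hSmem c h).1
      have hNe : G.neighborSet e = insert c S := by
        have hsub : insert c S ⊆ G.neighborSet e := by
          rintro v (rfl | hv)
          · exact hec
          · exact hSsubNe hv
        refine (Set.eq_of_subset_of_ncard_le hsub ?_).symm
        rw [Set.ncard_insert_of_notMem hcS, hScard, hreg e]
        omega
      have hbS : ∀ y ∈ S, ¬ G.Adj b y := by
        intro y hy hby
        obtain ⟨hya, hyb⟩ := hSmem y hy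
        have hey : G.Adj e y := hSsubNe hy
        rcases hnc2 y hby hey with rfl | rfl
        · exact G.irrefl hya
        · exact hac hya
      have hcS' : ∀ y ∈ S, ¬ G.Adj c y := by
        intro y hy hcy
        obtain ⟨hya, hyb⟩ := hSmem y hy
        rcases hnc1 y hya hcy with rfl | rfl
        · exact hyb rfl
        · exact hae hya
      set T : Set V := G.neighborSet b \ {a, c} with hTdef
      have hacNb : ({a, c} : Set V) ⊆ G.neighborSet b := by
        rintro v (rfl | rfl)
        · exact hba
        · exact hbc
      have hTcard : T.ncard = d - 2 := by
        rw [hTdef, Set.ncard_diff hacNb, Set.ncard_pair nac, hreg b]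
      have hTmem : ∀ y ∈ T, G.Adj b y ∧ y ≠ a ∧ y ≠ c := by
        intro y hy
        refine ⟨hy.1, ?_⟩
        have := hy.2
        simp only [Set.mem_insert_iff, Set.mem_singleton_iff] at this
        tauto
      have hSnadj : ∀ y ∈ S, y ≠ a ∧ y ≠ b ∧ y ≠ c ∧ y ≠ e := by
        intro y hy
        obtain ⟨hya, hyb⟩ := hSmem y hy
        exact ⟨fun h => G.irrefl (h ▸ hya), hyb, fun h => hac (h ▸ hya), fun h => hae (h ▸ hya)⟩
      have hTnadj : ∀ y ∈ T, y ≠ a ∧ y ≠ b ∧ y ≠ c ∧ y ≠ e := by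
        intro y hy
        obtain ⟨hyb, hya, hyc⟩ := hTmem y hy
        exact ⟨hya, fun h => G.irrefl (h ▸ hyb), hyc, fun h => hbe (h ▸ hyb)⟩
      have hST : ∀ y ∈ S, y ∉ T := by
        intro y hy hyT
        exact hbS y hy (hTmem y hyT).1
      -- exhaustion
      have hdisj1 : Disjoint ({a, b, c, e} : Set V) S := by
        rw [Set.disjoint_left]
        rintro v (rfl | rfl | rfl | rfl) hv <;>
          first
          | exact (hSnadj _ hv).1 rfl
          | exact (hSnadj _ hv).2.1 rfl
          | exact (hSnadj _ hv).2.2.1 rfl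
          | exact (hSnadj _ hv).2.2.2 rfl
      have hdisj2 : Disjoint (({a, b, c, e} : Set V) ∪ S) T := by
        rw [Set.disjoint_left]
        rintro v (hv | hv) hvT
        · rcases hv with rfl | rfl | rfl | rfl
          · exact (hTnadj _ hvT).1 rfl
          · exact (hTnadj _ hvT).2.1 rfl
          · exact (hTnadj _ hvT).2.2.1 rfl
          · exact (hTnadj _ hvT).2.2.2 rfl
        · exact hST v hv hvT
      have hquadcard : ({a, b, c, e} : Set V).ncard = 4 := by
        rw [Set.ncard_insert_of_notMem (by simp [nab, nac, nae]),
          Set.ncard_insert_of_notMem (by simp [nbc, nbe]), Set.ncard_pair nce]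
      have hWcard : ((({a, b, c, e} : Set V) ∪ S) ∪ T).ncard = 2*d+1 := by
        rw [Set.ncard_union_eq hdisj2, Set.ncard_union_eq hdisj1, hquadcard, hScard, hTcard]
        omega
      have hW : Set.univ = (({a, b, c, e} : Set V) ∪ S) ∪ T := by
        refine (Set.eq_of_subset_of_ncard_le (Set.subset_univ _) ?_).symm
        rw [hWcard, Set.ncard_univ]
        exact hcard
      have hmemW : ∀ v : V, v ∈ (({a, b, c, e} : Set V) ∪ S) ∪ T := by
        intro v
        have : v ∈ (Set.univ : Set V) := trivial
        rwa [hW] at this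
      -- T ⊆ N(c)
      have hNcsub : G.neighborSet c ⊆ ({b, e} : Set V) ∪ T := by
        intro v hv
        have hcv : G.Adj c v := hv
        rcases hmemW v with ((rfl | rfl | rfl | rfl) | hvS) | hvT
        · exact absurd hcv.symm hac
        · exact Or.inl (Or.inl rfl)
        · exact absurd hcv (G.irrefl)
        · exact Or.inl (Or.inr rfl)
        · exact absurd hcv (hcS' v hvS)
        · exact Or.inr hvT
      have hbeT_disj : Disjoint ({b, e} : Set V) T := by
        rw [Set.disjoint_left]
        rintro v (rfl | rfl) hvT
        · exact (hTnadj _ hvT).2.1 rfl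
        · exact (hTnadj _ hvT).2.2.2 rfl
      have hNc : G.neighborSet c = ({b, e} : Set V) ∪ T := by
        refine Set.eq_of_subset_of_ncard_le hNcsub ?_
        rw [Set.ncard_union_eq hbeT_disj, Set.ncard_pair nbe, hTcard, hreg c]
        omega
      have hTNc : ∀ y ∈ T, G.Adj c y := by
        intro y hy
        have : y ∈ G.neighborSet c := by rw [hNc]; exact Or.inr hy
        exact this
      have hNa : G.neighborSet a = insert b S := by
        rw [hSdef, Set.insert_diff_singleton, Set.insert_eq_self.mpr hbNa]
      -- pick t
      have htex : T.Nonempty := by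
        apply Set.nonempty_of_ncard_ne_zero
        rw [hTcard]
        omega
      obtain ⟨t, htT⟩ := htex
      have htb : G.Adj b t := (hTmem t htT).1
      have htc : G.Adj c t := hTNc t htT
      have nta : t ≠ a := (hTnadj t htT).1
      have ntb' : t ≠ b := (hTnadj t htT).2.1
      have ntc : t ≠ c := (hTnadj t htT).2.2.1
      have nte : t ≠ e := (hTnadj t htT).2.2.2
      have hta : ¬ G.Adj t a := by
        intro h
        have : t ∈ G.neighborSet a := h.symm
        rw [hNa] at this
        rcases this with rfl | hts
        · exact G.irrefl htb
        · exact hST t hts htT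
      have hte : ¬ G.Adj t e := by
        intro h
        have : t ∈ G.neighborSet e := h.symm
        rw [hNe] at this
        rcases this with rfl | hts
        · exact ntc rfl
        · exact hST t hts htT
      -- pick s'
      have hsex : ∃ y ∈ S, G.Adj t y := by
        by_contra hno
        push_neg at hno
        have hNtsub : G.neighborSet t ⊆ insert b (insert c (T \ {t})) := by
          intro v hv
          have htv : G.Adj t v := hv
          rcases hmemW v with ((rfl | rfl | rfl | rfl) | hvS) | hvT
          · exact absurd htv hta
          · exact Or.inl rfl
          · exact Or.inr (Or.inl rfl)
          · exact absurd htv hte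
          · exact absurd htv (hno v hvS)
          · exact Or.inr (Or.inr ⟨hvT, by simpa using (G.ne_of_adj htv).symm⟩)
        have h1 := Set.ncard_le_ncard hNtsub (Set.toFinite _)
        have h2 := Set.ncard_insert_le b (insert c (T \ {t}))
        have h3 := Set.ncard_insert_le c (T \ {t})
        have h4 : (T \ {t}).ncard = T.ncard - 1 := Set.ncard_diff_singleton_of_mem htT
        rw [hreg t] at h1
        rw [hTcard] at h4
        omega
      obtain ⟨s', hs'S, hts'⟩ := hsex
      have hs'a : G.Adj a s' := (hSmem s' hs'S).1
      have hs'e : G.Adj e s' := hSsubNe hs'S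
      have hbs' : ¬ G.Adj b s' := hbS s' hs'S
      have hcs' : ¬ G.Adj c s' := hcS' s' hs'S
      obtain ⟨ns'a, ns'b, ns'c, ns'e⟩ := hSnadj s' hs'S
      have nts' : t ≠ s' := G.ne_of_adj hts'
      have nas' := ns'a.symm
      have nbs' := ns'b.symm
      have ncs' := ns'c.symm
      have nes' := ns'e.symm
      have nat' := nta.symm
      have nbt := ntb'.symm
      have nct := ntc.symm
      have net := nte.symm
      have nst := nts'.symm
      -- switch 1 : remove bc, es' ; add be, cs'
      set G1 := swapE G b c e s' with hG1
      have st1 : DeltaSwitch G G1 :=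
        deltaMinus_swap G ntc ntb' nte nts' ncb nce ncs' nbe nbs' nes'
          htb.symm htc.symm hbc hs'e hbe hcs'
      have adj1 : ∀ u v : V, (G1.Adj u v ↔
          ((G.Adj u v ∧ s(u,v) ≠ s(b,c) ∧ s(u,v) ≠ s(e,s')) ∨ (s(u,v) = s(b,e) ∨ s(u,v) = s(c,s')))) :=
        fun u v => by rw [hG1]; exact swapE_adj G nbe ncs' u v
      have B1 : G1.Adj t b := by
        rw [adj1]; left
        refine ⟨htb.symm, ?_, ?_⟩ <;> (simp only [Ne, Sym2.eq_iff]; tauto)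
      have B2 : G1.Adj t s' := by
        rw [adj1]; left
        refine ⟨hts', ?_, ?_⟩ <;> (simp only [Ne, Sym2.eq_iff]; tauto)
      have B3 : G1.Adj b a := by
        rw [adj1]; left
        refine ⟨hba, ?_, ?_⟩ <;> (simp only [Ne, Sym2.eq_iff]; tauto)
      have B4 : G1.Adj s' c := by
        rw [adj1]; right; right; rw [Sym2.eq_iff]; tauto
      have B5 : G1.Adj t c := by
        rw [adj1]; left
        refine ⟨htc.symm, ?_, ?_⟩ <;> (simp only [Ne, Sym2.eq_iff]; tauto)
      have B6 : G1.Adj c e := by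
        rw [adj1]; left
        refine ⟨hce, ?_, ?_⟩ <;> (simp only [Ne, Sym2.eq_iff]; tauto)
      have BN1 : ¬ G1.Adj b s' := by
        rw [adj1]
        rintro (⟨h, -, -⟩ | h | h)
        · exact hbs' h
        · rw [Sym2.eq_iff] at h; tauto
        · rw [Sym2.eq_iff] at h; tauto
      have BN2 : ¬ G1.Adj a c := by
        rw [adj1]
        rintro (⟨h, -, -⟩ | h | h)
        · exact hac h
        · rw [Sym2.eq_iff] at h; tauto
        · rw [Sym2.eq_iff] at h; tauto
      have BN3 : ¬ G1.Adj b c := by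
        rw [adj1]
        rintro (⟨-, h, -⟩ | h | h)
        · exact h rfl
        · rw [Sym2.eq_iff] at h; tauto
        · rw [Sym2.eq_iff] at h; tauto
      have BN4 : ¬ G1.Adj s' e := by
        rw [adj1]
        rintro (⟨-, -, h⟩ | h | h)
        · exact h (by rw [Sym2.eq_iff]; tauto)
        · rw [Sym2.eq_iff] at h; tauto
        · rw [Sym2.eq_iff] at h; tauto
      -- switch 2 : remove ba, s'c ; add bs', ac
      set G2 := swapE G1 b a s' c with hG2
      have st2 : DeltaSwitch G1 G2 :=
        deltaPlus_swap G1 nts' ntb' nta ntc ns'b ns'a ns'c nba nbc nac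
          B1 B2 B3 B4 BN1 BN2
      have adj2 : ∀ u v : V, (G2.Adj u v ↔
          ((G1.Adj u v ∧ s(u,v) ≠ s(b,a) ∧ s(u,v) ≠ s(s',c)) ∨ (s(u,v) = s(b,s') ∨ s(u,v) = s(a,c)))) :=
        fun u v => by rw [hG2]; exact swapE_adj G1 nbs' nac u v
      have C1 : G2.Adj t b := by
        rw [adj2]; left
        refine ⟨B1, ?_, ?_⟩ <;> (simp only [Ne, Sym2.eq_iff]; tauto)
      have C2 : G2.Adj t c := by
        rw [adj2]; left
        refine ⟨B5, ?_, ?_⟩ <;> (simp only [Ne, Sym2.eq_iff]; tauto)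
      have C3 : G2.Adj b s' := by
        rw [adj2]; right; left; rfl
      have C4 : G2.Adj c e := by
        rw [adj2]; left
        refine ⟨B6, ?_, ?_⟩ <;> (simp only [Ne, Sym2.eq_iff]; tauto)
      have CN1 : ¬ G2.Adj b c := by
        rw [adj2]
        rintro (⟨h, -, -⟩ | h | h)
        · exact BN3 h
        · rw [Sym2.eq_iff] at h; tauto
        · rw [Sym2.eq_iff] at h; tauto
      have CN2 : ¬ G2.Adj s' e := by
        rw [adj2]
        rintro (⟨h, -, -⟩ | h | h)
        · exact BN4 h
        · rw [Sym2.eq_iff] at h; tauto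
        · rw [Sym2.eq_iff] at h; tauto
      -- switch 3 : remove bs', ce ; add bc, s'e
      have st3 : DeltaSwitch G2 (swapE G2 b s' c e) :=
        deltaPlus_swap G2 ntc ntb' nts' nte ncb ncs' nce nbs' nbe ns'e
          C1 C2 C3 C4 CN1 CN2
      have heq : swapE G2 b s' c e = swapE G a b c e := by
        apply SimpleGraph.edgeSet_inj.mp
        rw [swapE_edgeSet G2 nbc ns'e, hG2, swapE_edgeSet G1 nbs' nac, hG1,
          swapE_edgeSet G nbe ncs', swapE_edgeSet G nac nbe,
          show s(e,s') = s(s',e) from Sym2.eq_swap,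
          show s(s',c) = s(c,s') from Sym2.eq_swap,
          show s(b,a) = s(a,b) from Sym2.eq_swap]
        refine setswap3 G.edgeSet s(b,c) s(s',e) s(b,e) s(c,s') s(a,b) s(a,c) s(b,s') s(c,e)
          (G.mem_edgeSet.mpr hbc) (G.mem_edgeSet.mpr hs'e.symm) (G.mem_edgeSet.mpr hab)
          (G.mem_edgeSet.mpr hce)
          (fun h => hbe (G.mem_edgeSet.mp h)) (fun h => hcs' (G.mem_edgeSet.mp h))
          (fun h => hac (G.mem_edgeSet.mp h)) (fun h => hbs' (G.mem_edgeSet.mp h))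
          ?_ ?_ ?_ ?_ ?_ ?_ ?_ ?_ ?_ ?_ ?_ ?_ ?_ ?_ ?_ ?_ ?_ ?_ ?_ ?_ ?_ ?_ ?_ ?_ ?_ ?_ ?_ ?_ <;>
          (simp only [Ne, Sym2.eq_iff]; tauto)
      exact Relation.ReflTransGen.head st1 (Relation.ReflTransGen.head st2
        (Relation.ReflTransGen.single (heq ▸ st3)))


end Simulate

section Final
variable {V : Type*} [Finite V]

lemma simulate {d : ℕ} (hd : 3 ≤ d) (hcard : Nat.card V ≤ 2*d+1)
    (G G' : SimpleGraph V) (hreg : ∀ u, (G.neighborSet u).ncard = d)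
    (hsw : PSwitch G G') : DeltaEquiv G G' := by
  obtain ⟨a, b, c, e, nab, nac, nae, nbc, nbe, nce, hab, hce, hac, hbe, rfl⟩ := hsw
  have nca : c ≠ a := nac.symm
  have neb : e ≠ b := nbe.symm
  have nea : e ≠ a := nae.symm
  have nec : e ≠ c := nce.symm
  have nba : b ≠ a := nab.symm
  by_cases hc1 : ∃ v, G.Adj a v ∧ G.Adj c v ∧ v ≠ b ∧ v ≠ e
  · obtain ⟨v, hva, hvc, hvb, hve⟩ := hc1
    have nvc : v ≠ c := G.ne_of_adj hvc.symm
    have nva : v ≠ a := G.ne_of_adj hva.symm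
    exact Relation.ReflTransGen.single
      (deltaPlus_swap G nvc nva hvb hve nca nbc.symm nce nab nae nbe
        hva.symm hvc.symm hab hce hac hbe)
  · by_cases hc2 : ∃ v, G.Adj b v ∧ G.Adj e v ∧ v ≠ a ∧ v ≠ c
    · obtain ⟨v, hvb, hve, hva, hvc⟩ := hc2
      have nve : v ≠ e := G.ne_of_adj hve.symm
      have nvb : v ≠ b := G.ne_of_adj hvb.symm
      rw [swapE_comm₁]
      exact Relation.ReflTransGen.single
        (deltaPlus_swap G nve nvb hva hvc neb nea nec nba nbc nac
          hvb.symm hve.symm hab.symm hce.symm hbe hac)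
    · push_neg at hc1
      push_neg at hc2
      have hnc1 : ∀ v, G.Adj a v → G.Adj c v → v = b ∨ v = e := by
        intro v h1 h2
        by_cases hvb : v = b
        · exact Or.inl hvb
        · exact Or.inr (hc1 v h1 h2 hvb)
      have hnc2 : ∀ v, G.Adj b v → G.Adj e v → v = a ∨ v = c := by
        intro v h1 h2
        by_cases hva : v = a
        · exact Or.inl hva
        · exact Or.inr (hc2 v h1 h2 hva)
      obtain ⟨v0, hv0a, hv0c⟩ := common_nbr hd hcard G hreg nac hac
      rcases hnc1 v0 hv0a hv0c with rfl | rfl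
      · -- bc edge present
        exact simulate3 hd hcard G hreg nab nac nae nbc nbe nce hab hce hac hbe
          hv0c.symm hnc1 hnc2
      · -- ae edge present; relabel (b, a, e, c)
        rw [swapE_comm₁]
        exact simulate3 hd hcard G hreg nab.symm nbe nbc nae nac nec
          hab.symm hce.symm hbe hac hv0a hnc2 hnc1

end Final

lemma upgrade {V : Type*} [Finite V] {d : ℕ} (hd : 3 ≤ d) (hcard : Nat.card V ≤ 2*d+1)
    (G H : SimpleGraph V) (h : Relation.ReflTransGen PSwitch G H)
    (hreg : ∀ u, (G.neighborSet u).ncard = d) : DeltaEquiv G H := by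
  revert hreg
  induction h using Relation.ReflTransGen.head_induction_on with
  | refl => exact fun _ => Relation.ReflTransGen.refl
  | head hstep hrest ih =>
    intro hreg
    rename_i x y
    have hreg' : ∀ u, (y.neighborSet u).ncard = d :=
      fun u => (hstep.ncard_nbr u).trans (hreg u)
    exact Relation.ReflTransGen.trans (simulate hd hcard x y hreg hstep) (ih hreg')


/-- For `d ≥ 3` and `d+1 < n < 2(d+1)`, any two `d`-regular graphs on the same
vertex set of size `n` (i.e. fragments) are Δ-switch equivalent. -/
theorem fragments_delta_switch_connected {d n : ℕ} (hd : 3 ≤ d)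
    (h1 : d + 1 < n) (h2 : n < 2 * (d + 1))
    (G H : SimpleGraph (Fin n))
    (hG : RegularDeg G d) (hH : RegularDeg H d) :
    DeltaEquiv G H := by
  have hcard : Nat.card (Fin n) ≤ 2*d+1 := by
    simp only [Nat.card_eq_fintype_card, Fintype.card_fin]
    omega
  have hdeg : ∀ u, (G.neighborSet u).ncard = (H.neighborSet u).ncard :=
    fun u => (hG u).trans (hH u).symm
  exact upgrade hd hcard G H (plain_connect G H hdeg) hG
end

section
/- Let d ≥ 3 and n > 2(d+1), let G be a d-regular graph on n vertices, and let v be a vertex of G whose connected component C satisfies d+1 < |C| < 2(d+1). Then there is a sequence of at most two Δ-switches transforming G into a graph G' such that N_{G'}(v) = N_G(v), the set of edges of G' joining two vertices of N_G(v) equals the set of edges of G joining two vertices of N_G(v), the connected component of v in G' has at least 2d+3 vertices, and there exist two distinct non-adjacent vertices of G' both at graph distance exactly 2 from v in G'. -/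
open SimpleGraph

set_option linter.unusedSectionVars false
set_option maxHeartbeats 1000000

section Helpers
variable {V : Type*} [Fintype V]

private lemma pairwise5 {P W X Y Z : V} (d1 : P ≠ W) (d2 : P ≠ X) (d3 : P ≠ Y) (d4 : P ≠ Z)
    (d5 : W ≠ X) (d6 : W ≠ Y) (d7 : W ≠ Z) (d8 : X ≠ Y) (d9 : X ≠ Z) (d10 : Y ≠ Z) :
    List.Pairwise (· ≠ ·) [P, W, X, Y, Z] := by
  simp only [List.pairwise_cons, List.mem_cons, List.not_mem_nil, List.mem_singleton,
    or_false, List.Pairwise.nil, and_true, forall_eq_or_imp, forall_eq, false_implies,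
    implies_true]
  exact ⟨⟨d1, d2, d3, d4⟩, ⟨d5, d6, d7⟩, ⟨d8, d9⟩, d10⟩

private lemma sym2_ne1 {a b c e : V} (h1 : a ≠ c) (h2 : a ≠ e) : s(a, b) ≠ s(c, e) := by
  intro h
  rcases Sym2.eq_iff.mp h with ⟨h', _⟩ | ⟨h', _⟩
  · exact h1 h'
  · exact h2 h'

private lemma exists_mem_avoid1 {S : Set V} (h : 2 ≤ S.ncard) (a : V) :
    ∃ c ∈ S, c ≠ a := by
  by_contra hc
  push_neg at hc
  have hsub : S ⊆ {a} := fun c hcS => hc c hcS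
  have := Set.ncard_le_ncard hsub (Set.toFinite _)
  rw [Set.ncard_singleton] at this
  omega

private lemma exists_mem_avoid2 {S : Set V} (h : 3 ≤ S.ncard) (a b : V) :
    ∃ c ∈ S, c ≠ a ∧ c ≠ b := by
  by_contra hc
  push_neg at hc
  have hsub : S ⊆ insert a {b} := by
    intro c hcS
    by_cases hca : c = a
    · exact Or.inl hca
    · exact Or.inr (hc c hcS hca)
  have h1 := Set.ncard_le_ncard hsub (Set.toFinite _)
  have h2 : (insert a ({b} : Set V)).ncard ≤ 2 := by
    refine le_trans (Set.ncard_insert_le _ _) ?_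
    rw [Set.ncard_singleton]
  omega

private lemma dist_two {G : SimpleGraph V} {v m a : V} (h1 : G.Adj v m) (h2 : G.Adj m a)
    (h3 : ¬ G.Adj v a) (h4 : v ≠ a) : G.dist v a = 2 := by
  have hreach : G.Reachable v a := h1.reachable.trans h2.reachable
  have hle : G.dist v a ≤ 2 := by
    have := SimpleGraph.dist_le (Walk.cons h1 (Walk.cons h2 Walk.nil))
    simpa using this
  have h0 : G.dist v a ≠ 0 := by
    intro h
    rcases SimpleGraph.dist_eq_zero_iff_eq_or_not_reachable.mp h with h' | h'
    · exact h4 h'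
    · exact h' hreach
  have h1' : G.dist v a ≠ 1 := by
    intro h
    exact h3 (SimpleGraph.dist_eq_one_iff_adj.mp h)
  omega

private def swG (G : SimpleGraph V) (x w y z : V) : SimpleGraph V :=
  SimpleGraph.fromEdgeSet ((G.edgeSet \ {s(x, y), s(w, z)}) ∪ {s(x, w), s(y, z)})

private lemma swG_adj (G : SimpleGraph V) (x w y z a b : V) :
    (swG G x w y z).Adj a b ↔
      ((G.Adj a b ∧ s(a, b) ≠ s(x, y) ∧ s(a, b) ≠ s(w, z)) ∨
        ((s(a, b) = s(x, w) ∨ s(a, b) = s(y, z)) ∧ a ≠ b)) := by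
  simp only [swG, SimpleGraph.fromEdgeSet_adj, Set.mem_union, Set.mem_diff,
    SimpleGraph.mem_edgeSet, Set.mem_insert_iff, Set.mem_singleton_iff]
  constructor
  · rintro ⟨h | h, hne⟩
    · exact Or.inl ⟨h.1, fun he => h.2 (Or.inl he), fun he => h.2 (Or.inr he)⟩
    · exact Or.inr ⟨h, hne⟩
  · rintro (⟨h1, h2, h3⟩ | ⟨h, hne⟩)
    · exact ⟨Or.inl ⟨h1, by rintro (he | he); exacts [h2 he, h3 he]⟩, h1.ne⟩
    · exact ⟨Or.inr h, hne⟩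

private lemma swG_edgeSet (G : SimpleGraph V) (x w y z : V) (hxw : x ≠ w) (hyz : y ≠ z) :
    (swG G x w y z).edgeSet = (G.edgeSet \ {s(x, y), s(w, z)}) ∪ {s(x, w), s(y, z)} := by
  rw [swG, SimpleGraph.edgeSet_fromEdgeSet]
  ext e
  simp only [Set.mem_diff, Set.mem_union, Set.mem_insert_iff, Set.mem_singleton_iff,
    Set.mem_setOf_eq]
  constructor
  · exact fun h => h.1
  · intro h
    refine ⟨h, ?_⟩
    rcases h with ⟨he, _⟩ | (he | he)
    · exact G.not_isDiag_of_mem_edgeSet he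
    · subst he; simpa using hxw
    · subst he; simpa using hyz

private lemma config_of_closure {G : SimpleGraph V} {d : ℕ} (hd : 3 ≤ d)
    (hreg : ∀ x : V, (G.neighborSet x).ncard = d)
    {S : Set V} (hcl : ∀ ⦃a b⦄, a ∈ S → G.Adj a b → b ∈ S)
    (htf : ∀ ⦃a b c⦄, a ∈ S → G.Adj a b → G.Adj a c → G.Adj b c → False)
    {p : V} (hp : p ∈ S) :
    ∃ P X W Y Z : V, P ∈ S ∧
      G.Adj P X ∧ G.Adj P W ∧ G.Adj X Y ∧ G.Adj W Z ∧ ¬ G.Adj X W ∧ ¬ G.Adj Y Z ∧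
      P ≠ W ∧ P ≠ X ∧ P ≠ Y ∧ P ≠ Z ∧ W ≠ X ∧ W ≠ Y ∧ W ≠ Z ∧ X ≠ Y ∧ X ≠ Z ∧ Y ≠ Z := by
  have mk : ∀ P X W Y Z : V, P ∈ S → G.Adj P X → G.Adj P W → X ≠ W → ¬ G.Adj X W →
      G.Adj X Y → Y ≠ P → G.Adj W Z → Z ≠ P → Y ≠ Z → ¬ G.Adj Y Z →
      ∃ P X W Y Z : V, P ∈ S ∧
      G.Adj P X ∧ G.Adj P W ∧ G.Adj X Y ∧ G.Adj W Z ∧ ¬ G.Adj X W ∧ ¬ G.Adj Y Z ∧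
      P ≠ W ∧ P ≠ X ∧ P ≠ Y ∧ P ≠ Z ∧ W ≠ X ∧ W ≠ Y ∧ W ≠ Z ∧ X ≠ Y ∧ X ≠ Z ∧ Y ≠ Z := by
    intro P X W Y Z hP hPX hPW hXWne hXW hXY hYP hWZ hZP hYZ hYZ'
    refine ⟨P, X, W, Y, Z, hP, hPX, hPW, hXY, hWZ, hXW, hYZ', hPW.ne, hPX.ne, hYP.symm,
      hZP.symm, hXWne.symm, ?_, hWZ.ne, hXY.ne, ?_, hYZ⟩
    · intro h; exact hXW (by rw [h]; exact hXY)
    · intro h; exact hXW (by rw [h]; exact hWZ.symm)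
  obtain ⟨x0, hx0m, w0, hw0m, hx0w0⟩ :=
    (Set.one_lt_ncard (Set.toFinite _)).mp (by rw [hreg p]; omega : 1 < (G.neighborSet p).ncard)
  have hx0 : G.Adj p x0 := hx0m
  have hw0 : G.Adj p w0 := hw0m
  have hnadj : ¬ G.Adj x0 w0 := fun h => htf hp hx0 hw0 h
  have hx0S : x0 ∈ S := hcl hp hx0
  by_cases hA : ∃ y z, G.Adj x0 y ∧ y ≠ p ∧ G.Adj w0 z ∧ z ≠ p ∧ y ≠ z ∧ ¬ G.Adj y z
  · obtain ⟨y, z, h1, h2, h3, h4, h5, h6⟩ := hA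
    exact mk p x0 w0 y z hp hx0 hw0 hx0w0 hnadj h1 h2 h3 h4 h5 h6
  push_neg at hA
  obtain ⟨y1, hy1m, hy1p⟩ := exists_mem_avoid1 (S := G.neighborSet x0) (by rw [hreg]; omega) p
  have hy1 : G.Adj x0 y1 := hy1m
  have hpy1 : ¬ G.Adj p y1 := fun h => htf hp hx0 h hy1
  by_cases hB : ∃ y z, G.Adj p y ∧ y ≠ x0 ∧ G.Adj y1 z ∧ z ≠ x0 ∧ y ≠ z ∧ ¬ G.Adj y z
  · obtain ⟨y, z, h1, h2, h3, h4, h5, h6⟩ := hB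
    exact mk x0 p y1 y z hx0S hx0.symm hy1 hy1p.symm hpy1 h1 h2 h3 h4 h5 h6
  push_neg at hB
  exfalso
  obtain ⟨z1, hz1m, hz1p, hz1y1⟩ :=
    exists_mem_avoid2 (S := G.neighborSet w0) (by rw [hreg]; omega) p y1
  have hz1 : G.Adj w0 z1 := hz1m
  obtain ⟨t, htm, htx0, htw0⟩ :=
    exists_mem_avoid2 (S := G.neighborSet p) (by rw [hreg]; omega) x0 w0
  have ht : G.Adj p t := htm
  have hpz1 : ¬ G.Adj p z1 := fun h => htf hp hw0 h hz1
  have hz1x0 : z1 ≠ x0 := fun h => hnadj (by rw [← h]; exact hz1.symm)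
  have hy1z1 : G.Adj y1 z1 := hA y1 z1 hy1 hy1p hz1 hz1p hz1y1.symm
  have htz1ne : t ≠ z1 := fun h => hpz1 (by rw [h] at ht; exact ht)
  have htz1 : G.Adj t z1 := hB t z1 ht htx0 hy1z1 hz1x0 htz1ne
  have htnx0 : ¬ G.Adj x0 t := fun h => htf hp hx0 ht h
  have hFsub : insert w0 (insert t (G.neighborSet x0 \ {p, z1})) ⊆ G.neighborSet z1 := by
    rintro c (rfl | rfl | ⟨hc1, hc2⟩)
    · exact hz1.symm
    · exact htz1.symm
    · simp only [Set.mem_insert_iff, Set.mem_singleton_iff] at hc2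
      push_neg at hc2
      have hcadj : G.Adj x0 c := hc1
      exact (hA c z1 hcadj hc2.1 hz1 hz1p hc2.2).symm
  have hw0nx0 : w0 ∉ G.neighborSet x0 := fun h => hnadj h
  have htnb : t ∉ G.neighborSet x0 := fun h => htnx0 h
  have hcardz1 : (G.neighborSet z1).ncard = d := hreg z1
  have hpx0 : p ∈ G.neighborSet x0 := hx0.symm
  by_cases hz1x : z1 ∈ G.neighborSet x0
  · have hdiffeq : G.neighborSet x0 \ {p, z1} = (G.neighborSet x0 \ {p}) \ {z1} := by
      ext c; simp only [Set.mem_diff, Set.mem_insert_iff, Set.mem_singleton_iff]; tauto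
    have hc1 : (G.neighborSet x0 \ {p}).ncard = d - 1 := by
      rw [Set.ncard_diff_singleton_of_mem hpx0, hreg]
    have hz1mem : z1 ∈ G.neighborSet x0 \ {p} := ⟨hz1x, by simpa using hz1p⟩
    have hc2 : (G.neighborSet x0 \ {p, z1}).ncard = d - 2 := by
      rw [hdiffeq, Set.ncard_diff_singleton_of_mem hz1mem, hc1]
      omega
    have htno : t ∉ G.neighborSet x0 \ {p, z1} := fun h => htnb h.1
    have hw0no : w0 ∉ insert t (G.neighborSet x0 \ {p, z1}) := by
      rintro (rfl | h)
      · exact htw0 rfl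
      · exact hw0nx0 h.1
    have hx0no : x0 ∉ insert w0 (insert t (G.neighborSet x0 \ {p, z1})) := by
      rintro (rfl | rfl | h)
      · exact hx0w0 rfl
      · exact htx0 rfl
      · exact G.irrefl h.1
    have hx0z1 : x0 ∈ G.neighborSet z1 := SimpleGraph.Adj.symm hz1x
    have hsub2 : insert x0 (insert w0 (insert t (G.neighborSet x0 \ {p, z1}))) ⊆
        G.neighborSet z1 := Set.insert_subset hx0z1 hFsub
    have hle := Set.ncard_le_ncard hsub2 (Set.toFinite _)
    rw [Set.ncard_insert_of_notMem hx0no, Set.ncard_insert_of_notMem hw0no,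
      Set.ncard_insert_of_notMem htno, hc2, hcardz1] at hle
    omega
  · have hdiffeq : G.neighborSet x0 \ {p, z1} = G.neighborSet x0 \ {p} := by
      ext c
      simp only [Set.mem_diff, Set.mem_insert_iff, Set.mem_singleton_iff]
      constructor
      · rintro ⟨h1, h2⟩; push_neg at h2; exact ⟨h1, h2.1⟩
      · rintro ⟨h1, h2⟩
        refine ⟨h1, ?_⟩
        push_neg
        exact ⟨h2, fun hc => hz1x (hc ▸ h1)⟩
    have hc1 : (G.neighborSet x0 \ {p, z1}).ncard = d - 1 := by
      rw [hdiffeq, Set.ncard_diff_singleton_of_mem hpx0, hreg]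
    have htno : t ∉ G.neighborSet x0 \ {p, z1} := fun h => htnb h.1
    have hw0no : w0 ∉ insert t (G.neighborSet x0 \ {p, z1}) := by
      rintro (rfl | h)
      · exact htw0 rfl
      · exact hw0nx0 h.1
    have hle := Set.ncard_le_ncard hFsub (Set.toFinite _)
    rw [Set.ncard_insert_of_notMem hw0no, Set.ncard_insert_of_notMem htno, hc1,
      hcardz1] at hle
    omega

end Helpers

/-- If `v` lies in a fragment component of a `d`-regular graph `G` with
`n > 2(d+1)` vertices, then at most two Δ-switches produce a graph `G'` with the
same neighbourhood of `v`, the same edges inside `N_G(v)`, whose component of `v`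
has at least `2d+3` vertices, and which has a non-adjacent pair of vertices at
distance exactly `2` from `v`. -/
theorem enlarge_fragment_component {V : Type*} [Fintype V] {d : ℕ} (hd : 3 ≤ d)
    (hn : 2 * (d + 1) < Fintype.card V)
    (G : SimpleGraph V) (hreg : RegularDeg G d) (v : V)
    (hC1 : d + 1 < {u : V | G.Reachable v u}.ncard)
    (hC2 : {u : V | G.Reachable v u}.ncard < 2 * (d + 1)) :
    ∃ G' : SimpleGraph V,
      (∃ H : SimpleGraph V, (H = G ∨ DeltaSwitch G H) ∧ (G' = H ∨ DeltaSwitch H G')) ∧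
      G'.neighborSet v = G.neighborSet v ∧
      (∀ a ∈ G.neighborSet v, ∀ b ∈ G.neighborSet v, (G'.Adj a b ↔ G.Adj a b)) ∧
      2 * d + 3 ≤ {u : V | G'.Reachable v u}.ncard ∧
      (∃ a b : V, a ≠ b ∧ ¬ G'.Adj a b ∧ G'.dist v a = 2 ∧ G'.dist v b = 2) := by
  classical
  set C : Set V := {u : V | G.Reachable v u} with hCdef
  have hmemC : ∀ t : V, t ∈ C ↔ G.Reachable v t := fun t => Iff.rfl
  have hvC : v ∈ C := (hmemC v).mpr (Reachable.refl v)
  have hclC : ∀ ⦃a b : V⦄, a ∈ C → G.Adj a b → b ∈ C :=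
    fun a b ha hab => (hmemC b).mpr (((hmemC a).mp ha).trans hab.reachable)
  have hclC' : ∀ ⦃a b : V⦄, a ∉ C → G.Adj a b → b ∉ C :=
    fun a b ha hab hb => ha (hclC hb hab.symm)
  have hNC : ∀ a : V, G.Adj v a → a ∈ C := fun a h => hclC hvC h
  -- pick u in C at distance ≥ 2 from v
  obtain ⟨u, huC, huv, hvu⟩ : ∃ u, u ∈ C ∧ u ≠ v ∧ ¬ G.Adj v u := by
    by_contra h
    push_neg at h
    have hsub : C ⊆ insert v (G.neighborSet v) := by
      intro t htC
      by_cases htv : t = v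
      · exact Or.inl htv
      · exact Or.inr (h t htC htv)
    have h1 := Set.ncard_le_ncard hsub (Set.toFinite _)
    have h2 : (insert v (G.neighborSet v)).ncard ≤ d + 1 := by
      refine le_trans (Set.ncard_insert_le _ _) ?_
      rw [hreg v]
    omega
  -- diameter-two property of C
  have hdiam : ∀ t, t ∈ C → t ≠ v → ¬ G.Adj v t → ∃ m, G.Adj v m ∧ G.Adj m t := by
    intro t htC htv hvt
    by_contra h
    push_neg at h
    have hdisj : Disjoint (insert v (G.neighborSet v)) (insert t (G.neighborSet t)) := by
      rw [Set.disjoint_left]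
      rintro m (rfl | hm) (h' | h')
      · exact htv h'.symm
      · exact hvt (SimpleGraph.Adj.symm h')
      · exact hvt (h' ▸ hm)
      · exact h m hm (SimpleGraph.Adj.symm h')
    have hsub : insert v (G.neighborSet v) ∪ insert t (G.neighborSet t) ⊆ C := by
      rintro s (hs | hs)
      · rcases hs with rfl | hs
        · exact hvC
        · exact hNC s hs
      · rcases hs with rfl | hs
        · exact htC
        · exact hclC htC hs
    have h1 := Set.ncard_le_ncard hsub (Set.toFinite _)
    rw [Set.ncard_union_eq hdisj] at h1
    have h2 : (insert v (G.neighborSet v)).ncard = d + 1 := by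
      rw [Set.ncard_insert_of_notMem G.notMem_neighborSet_self, hreg v]
    have h3 : (insert t (G.neighborSet t)).ncard = d + 1 := by
      rw [Set.ncard_insert_of_notMem G.notMem_neighborSet_self, hreg t]
    omega
  -- a vertex outside C
  obtain ⟨q, hqC⟩ : ∃ q, q ∉ C := by
    by_contra h
    push_neg at h
    have huniv : C = Set.univ := Set.eq_univ_of_forall h
    rw [huniv, Set.ncard_univ, Nat.card_eq_fintype_card] at hC2
    omega
  -- the D-side package: (after at most one switch) a triangle P-X-W outside C
  obtain ⟨H, P, X, W, hHG, hPC, hXC, hWC, hPW, hPX, hXWne, hHPX, hHPW, hHXW, hPN, hagree⟩ :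
      ∃ (H : SimpleGraph V) (P X W : V), (H = G ∨ DeltaSwitch G H) ∧ P ∉ C ∧ X ∉ C ∧ W ∉ C ∧
        P ≠ W ∧ P ≠ X ∧ X ≠ W ∧ H.Adj P X ∧ H.Adj P W ∧ H.Adj X W ∧
        (∀ t, G.Adj P t → H.Adj P t) ∧ (∀ a b, a ∈ C → (H.Adj a b ↔ G.Adj a b)) := by
    by_cases htri : ∃ p x w : V, p ∉ C ∧ G.Adj p x ∧ G.Adj p w ∧ G.Adj x w
    · obtain ⟨p, x, w, hp, hpx, hpw, hxw⟩ := htri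
      exact ⟨G, p, x, w, Or.inl rfl, hp, hclC' hp hpx, hclC' hp hpw, hpw.ne, hpx.ne, hxw.ne,
        hpx, hpw, hxw, fun t h => h, fun a b _ => Iff.rfl⟩
    · push_neg at htri
      have hScl : ∀ ⦃a b : V⦄, a ∈ {x : V | x ∉ C} → G.Adj a b → b ∈ {x : V | x ∉ C} :=
        fun a b ha hab => hclC' ha hab
      have hStf : ∀ ⦃a b c : V⦄, a ∈ {x : V | x ∉ C} → G.Adj a b → G.Adj a c → G.Adj b c →
          False := fun a b c ha h1 h2 h3 => htri a b c ha h1 h2 h3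
      obtain ⟨P, X, W, Y, Z, hPS, hPX, hPW, hXY, hWZ, hXW, hYZ,
        d1, d2, d3, d4, d5, d6, d7, d8, d9, d10⟩ :=
        config_of_closure hd hreg hScl hStf (p := q) hqC
      have hPC : P ∉ C := hPS
      have hXC : X ∉ C := hclC' hPC hPX
      have hWC : W ∉ C := hclC' hPC hPW
      have hYC : Y ∉ C := hclC' hXC hXY
      have hZC : Z ∉ C := hclC' hWC hWZ
      refine ⟨swG G X W Y Z, P, X, W, ?_, hPC, hXC, hWC, d1, d2, fun h => d5 h.symm, ?_, ?_, ?_,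
        ?_, ?_⟩
      · refine Or.inr (Or.inl ⟨P, W, X, Y, Z, ?_, hPX, hPW, hXY, hWZ, hXW, hYZ,
          swG_edgeSet G X W Y Z (fun h => d5 h.symm) d10⟩)
        exact pairwise5 d1 d2 d3 d4 d5 d6 d7 d8 d9 d10
      · exact (swG_adj G X W Y Z P X).mpr
          (Or.inl ⟨hPX, sym2_ne1 d2 d3, sym2_ne1 d1 d4⟩)
      · exact (swG_adj G X W Y Z P W).mpr
          (Or.inl ⟨hPW, sym2_ne1 d2 d3, sym2_ne1 d1 d4⟩)
      · exact (swG_adj G X W Y Z X W).mpr (Or.inr ⟨Or.inl rfl, fun h => d5 h.symm⟩)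
      · intro t h
        exact (swG_adj G X W Y Z P t).mpr (Or.inl ⟨h, sym2_ne1 d2 d3, sym2_ne1 d1 d4⟩)
      · intro a b haC
        rw [swG_adj]
        constructor
        · rintro (⟨h, _, _⟩ | ⟨(he | he), _⟩)
          · exact h
          · exfalso
            rcases Sym2.eq_iff.mp he with ⟨h', _⟩ | ⟨h', _⟩
            · exact hXC (h' ▸ haC)
            · exact hWC (h' ▸ haC)
          · exfalso
            rcases Sym2.eq_iff.mp he with ⟨h', _⟩ | ⟨h', _⟩
            · exact hYC (h' ▸ haC)
            · exact hZC (h' ▸ haC)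
        · intro h
          exact Or.inl ⟨h, sym2_ne1 (fun hh => hXC (hh ▸ haC)) (fun hh => hYC (hh ▸ haC)),
            sym2_ne1 (fun hh => hWC (hh ▸ haC)) (fun hh => hZC (hh ▸ haC))⟩
  -- choose z₀ and m on the C side
  obtain ⟨z₀, hz₀, m, hvm, hmu, hmz₀⟩ :
      ∃ z₀, G.Adj u z₀ ∧ ∃ m, G.Adj v m ∧ G.Adj m u ∧ m ≠ z₀ := by
    by_cases hcase : ∃ z, G.Adj u z ∧ ¬ G.Adj v z
    · obtain ⟨z₀, h1, h2⟩ := hcase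
      obtain ⟨m, hm1, hm2⟩ := hdiam u huC huv hvu
      exact ⟨z₀, h1, m, hm1, hm2, fun h => h2 (h ▸ hm1)⟩
    · push_neg at hcase
      obtain ⟨z₀, hz₀m, m, hmm, hmne⟩ :=
        (Set.one_lt_ncard (Set.toFinite _)).mp
          (by rw [hreg u]; omega : 1 < (G.neighborSet u).ncard)
      have h1 : G.Adj u z₀ := hz₀m
      have h2 : G.Adj u m := hmm
      exact ⟨z₀, h1, m, hcase m h2, h2.symm, fun h => hmne h.symm⟩
  have hz₀C : z₀ ∈ C := hclC huC hz₀
  have hz₀v : z₀ ≠ v := fun h => hvu ((h ▸ hz₀ : G.Adj u v)).symm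
  have huz₀ : u ≠ z₀ := hz₀.ne
  have hmC : m ∈ C := hNC m hvm
  have huX : u ≠ X := fun h => hXC (h ▸ huC)
  have huW : u ≠ W := fun h => hWC (h ▸ huC)
  have huP : u ≠ P := fun h => hPC (h ▸ huC)
  have hz₀X : z₀ ≠ X := fun h => hXC (h ▸ hz₀C)
  have hz₀W : z₀ ≠ W := fun h => hWC (h ▸ hz₀C)
  have hz₀P : z₀ ≠ P := fun h => hPC (h ▸ hz₀C)
  -- the final graph
  set G' : SimpleGraph V := swG H X u W z₀ with hG'def
  have hG'adj : ∀ a b : V, G'.Adj a b ↔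
      ((H.Adj a b ∧ s(a, b) ≠ s(X, W) ∧ s(a, b) ≠ s(u, z₀)) ∨
        ((s(a, b) = s(X, u) ∨ s(a, b) = s(W, z₀)) ∧ a ≠ b)) :=
    fun a b => swG_adj H X u W z₀ a b
  -- the second switch
  have hswitch2 : DeltaSwitch H G' := by
    refine Or.inr ⟨P, W, X, u, z₀, ?_, hHPX, hHPW, hHXW,
      (hagree u z₀ huC).mpr hz₀, ?_, ?_, swG_edgeSet H X u W z₀ huX.symm hz₀W.symm⟩
    · exact pairwise5 hPW hPX huP.symm hz₀P.symm hXWne.symm huW.symm hz₀W.symm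
        huX.symm hz₀X.symm huz₀
    · intro h
      exact hXC (hclC huC ((hagree u X huC).mp h.symm))
    · intro h
      exact hWC (hclC hz₀C ((hagree z₀ W hz₀C).mp h.symm))
  -- neighbourhood of v is preserved
  have hNv : ∀ t, G'.Adj v t ↔ G.Adj v t := by
    intro t
    rw [hG'adj]
    constructor
    · rintro (⟨h, _, _⟩ | ⟨(he | he), _⟩)
      · exact (hagree v t hvC).mp h
      · exfalso
        rcases Sym2.eq_iff.mp he with ⟨h', _⟩ | ⟨h', _⟩
        · exact hXC (h' ▸ hvC)
        · exact huv h'.symm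
      · exfalso
        rcases Sym2.eq_iff.mp he with ⟨h', _⟩ | ⟨h', _⟩
        · exact hWC (h' ▸ hvC)
        · exact hz₀v h'.symm
    · intro h
      exact Or.inl ⟨(hagree v t hvC).mpr h,
        sym2_ne1 (fun hh => hXC (hh ▸ hvC)) (fun hh => hWC (hh ▸ hvC)),
        sym2_ne1 (fun hh => huv hh.symm) (fun hh => hz₀v hh.symm)⟩
  -- convenient edge transfer
  have c_edge : ∀ a b, a ∈ C → G.Adj a b → s(a, b) ≠ s(u, z₀) → G'.Adj a b := by
    intro a b haC hab hne
    refine (hG'adj a b).mpr (Or.inl ⟨(hagree a b haC).mpr hab,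
      sym2_ne1 (fun hh => hXC (hh ▸ haC)) (fun hh => hWC (hh ▸ haC)), hne⟩)
  -- bridge edges
  have hG'uX : G'.Adj u X :=
    (hG'adj u X).mpr (Or.inr ⟨Or.inl (Sym2.eq_swap), huX⟩)
  have hG'XP : G'.Adj X P := by
    refine (hG'adj X P).mpr (Or.inl ⟨hHPX.symm, ?_, sym2_ne1 huX.symm hz₀X.symm⟩)
    · intro h
      rcases Sym2.eq_iff.mp h with ⟨_, h2⟩ | ⟨h1, _⟩
      · exact hPW h2
      · exact hXWne h1
  have hG'PW : G'.Adj P W := by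
    refine (hG'adj P W).mpr (Or.inl ⟨hHPW, ?_, sym2_ne1 huP.symm hz₀P.symm⟩)
    intro h
    rcases Sym2.eq_iff.mp h with ⟨h1, _⟩ | ⟨h1, _⟩
    · exact hPX h1
    · exact hPW h1
  have hG'Wz₀ : G'.Adj W z₀ :=
    (hG'adj W z₀).mpr (Or.inr ⟨Or.inr rfl, hz₀W.symm⟩)
  have hreach_uz₀ : G'.Reachable u z₀ :=
    hG'uX.reachable.trans (hG'XP.reachable.trans (hG'PW.reachable.trans hG'Wz₀.reachable))
  have hedge_lift : ∀ a b, a ∈ C → G.Adj a b → G'.Reachable a b := by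
    intro a b haC hab
    by_cases he : s(a, b) = s(u, z₀)
    · rcases Sym2.eq_iff.mp he with ⟨h1, h2⟩ | ⟨h1, h2⟩
      · subst h1; subst h2; exact hreach_uz₀
      · subst h1; subst h2; exact hreach_uz₀.symm
    · exact (c_edge a b haC hab he).reachable
  have hCreach : ∀ t, t ∈ C → G'.Reachable v t := by
    intro t htC
    have h' := (SimpleGraph.reachable_iff_reflTransGen _ _).mp ((hmemC t).mp htC)
    clear htC
    induction h' with
    | refl => exact Reachable.refl v
    | tail h1 h2 ih =>
      exact ih.trans (hedge_lift _ _
        ((hmemC _).mpr ((SimpleGraph.reachable_iff_reflTransGen _ _).mpr h1)) h2)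
  -- component size
  have hPreach : G'.Reachable v P :=
    (hCreach u huC).trans (hG'uX.reachable.trans hG'XP.reachable)
  have hcomp : 2 * d + 3 ≤ {t : V | G'.Reachable v t}.ncard := by
    have hsub : C ∪ insert P (G.neighborSet P) ⊆ {t : V | G'.Reachable v t} := by
      rintro t (htC | rfl | htN)
      · exact hCreach t htC
      · exact hPreach
      · have h1 : H.Adj P t := hPN t htN
        have h2 : G'.Adj P t := (hG'adj P t).mpr
          (Or.inl ⟨h1, sym2_ne1 hPX hPW, sym2_ne1 huP.symm hz₀P.symm⟩)
        exact hPreach.trans h2.reachable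
    have hdisj : Disjoint C (insert P (G.neighborSet P)) := by
      rw [Set.disjoint_right]
      rintro t (rfl | htN) htC
      · exact hPC htC
      · exact hPC (hclC htC (SimpleGraph.Adj.symm htN))
    have h1 := Set.ncard_le_ncard hsub (Set.toFinite _)
    rw [Set.ncard_union_eq hdisj] at h1
    have h2 : (insert P (G.neighborSet P)).ncard = d + 1 := by
      rw [Set.ncard_insert_of_notMem G.notMem_neighborSet_self, hreg P]
    omega
  -- distance-two pair
  have hG'vu : ¬ G'.Adj v u := fun h => hvu ((hNv u).mp h)
  have hdu : G'.dist v u = 2 := by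
    refine dist_two ((hNv m).mpr hvm) ?_ hG'vu (fun h => huv h.symm)
    refine c_edge m u hmC hmu ?_
    intro h
    rcases Sym2.eq_iff.mp h with ⟨h1, _⟩ | ⟨h1, _⟩
    · exact hmu.ne h1
    · exact hmz₀ h1
  have hpair : ∃ a b : V, a ≠ b ∧ ¬ G'.Adj a b ∧ G'.dist v a = 2 ∧ G'.dist v b = 2 := by
    by_cases hvz₀ : G.Adj v z₀
    · -- pair (u, W)
      refine ⟨u, W, fun h => hWC (h ▸ huC), ?_, hdu, ?_⟩
      · intro h
        rcases (hG'adj u W).mp h with ⟨hH, _, _⟩ | ⟨(he | he), _⟩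
        · exact hWC (hclC huC ((hagree u W huC).mp hH))
        · rcases Sym2.eq_iff.mp he with ⟨h1, _⟩ | ⟨_, h2⟩
          · exact huX h1
          · exact hXWne h2.symm
        · rcases Sym2.eq_iff.mp he with ⟨h1, _⟩ | ⟨h1, _⟩
          · exact huW h1
          · exact huz₀ h1
      · refine dist_two ((hNv z₀).mpr hvz₀) hG'Wz₀.symm
          (fun h => hWC (hNC W ((hNv W).mp h))) (fun h => hWC (h ▸ hvC))
    · -- pair (u, z₀)
      obtain ⟨m', hm'1, hm'2⟩ := hdiam z₀ hz₀C hz₀v hvz₀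
      refine ⟨u, z₀, huz₀, ?_, hdu, ?_⟩
      · intro h
        rcases (hG'adj u z₀).mp h with ⟨_, _, hne⟩ | ⟨(he | he), _⟩
        · exact hne rfl
        · rcases Sym2.eq_iff.mp he with ⟨h1, _⟩ | ⟨_, h2⟩
          · exact huX h1
          · exact hz₀X h2
        · rcases Sym2.eq_iff.mp he with ⟨h1, _⟩ | ⟨h1, _⟩
          · exact huW h1
          · exact huz₀ h1
      · refine dist_two ((hNv m').mpr hm'1) ?_ (fun h => hvz₀ ((hNv z₀).mp h)) hz₀v.symm
        refine c_edge m' z₀ (hNC m' hm'1) hm'2 ?_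
        intro h
        rcases Sym2.eq_iff.mp h with ⟨h1, _⟩ | ⟨_, h2⟩
        · exact hvu (h1 ▸ hm'1)
        · exact huz₀ h2.symm
  -- final assembly
  refine ⟨G', ⟨H, hHG, Or.inr hswitch2⟩, ?_, ?_, hcomp, hpair⟩
  · ext t
    simp only [SimpleGraph.mem_neighborSet]
    exact hNv t
  · intro a haN b hbN
    have haC : a ∈ C := hNC a haN
    rw [hG'adj]
    constructor
    · rintro (⟨h, _, _⟩ | ⟨(he | he), _⟩)
      · exact (hagree a b haC).mp h
      · exfalso
        rcases Sym2.eq_iff.mp he with ⟨h1, _⟩ | ⟨_, h2⟩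
        · exact hXC (h1 ▸ haC)
        · exact hXC (h2 ▸ hNC b hbN)
      · exfalso
        rcases Sym2.eq_iff.mp he with ⟨h1, _⟩ | ⟨_, h2⟩
        · exact hWC (h1 ▸ haC)
        · exact hWC (h2 ▸ hNC b hbN)
    · intro h
      refine Or.inl ⟨(hagree a b haC).mpr h,
        sym2_ne1 (fun hh => hXC (hh ▸ haC)) (fun hh => hWC (hh ▸ haC)), ?_⟩
      intro hh
      rcases Sym2.eq_iff.mp hh with ⟨h1, _⟩ | ⟨_, h2⟩
      · exact hvu (h1 ▸ haN)
      · exact hvu (h2 ▸ hbN)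
end

section
/- Let d ≥ 3 and let G be a d-regular graph with a vertex v whose connected component contains at least 2(d+1) vertices. Suppose u ∈ N_G(v) has no neighbour in N_G(v). Then there is a sequence of at most two Δ-switches transforming G into a graph G' such that N_{G'}(v) = N_G(v) and the set of edges of G' joining two vertices of N_G(v) equals the set of edges of G joining two vertices of N_G(v) together with exactly one new edge, which is incident with u. -/
/-!
Fix a neighbour `w ≠ u` of `v` and, by counting, a neighbour `z ∉ N[v]` of `w`. If some
`y ∈ N(u) \ {v}` is neither equal nor adjacent to `z`, the Δ⁺-switch at `v` replacing `uy, wz`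
by `uw, yz` is the required single switch: as `y, z ∉ N[v]`, it changes nothing else around `v`.

Otherwise `z` is adjacent to every such `y`, and a first switch that avoids the pairs inside
`N[v]` deletes one edge `yz` while keeping `uy` and `wz`. If some `yz` lies in a triangle, this is
a Δ⁻-switch against an edge `pq` with `p ∉ N[y]` and `q ∉ N[z]`; such an edge has an end at
any vertex outside `N[v] ∪ N[z]`, a set of at most `2d + 1` vertices since `w` lies in both.
If no `yz` lies in a triangle, `z ∉ N(u)` and `N(u) \ {v}` is independent, and a Δ⁺-switch
centred at `u` joining two of its vertices does it.
-/

open SimpleGraph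

namespace SimpleGraph

variable {V : Type*} (G : SimpleGraph V)

def closedNbhd (v : V) : Set V := insert v (G.neighborSet v)

def switch (x y w z : V) : SimpleGraph V :=
  fromEdgeSet ((G.edgeSet \ {s(x, y), s(w, z)}) ∪ {s(x, w), s(y, z)})

variable {G}

section Switch

variable {x y w z a b : V}

lemma switch_adj :
    (G.switch x y w z).Adj a b ↔
      ((G.Adj a b ∧ s(a, b) ≠ s(x, y) ∧ s(a, b) ≠ s(w, z)) ∨
        s(a, b) = s(x, w) ∨ s(a, b) = s(y, z)) ∧ a ≠ b := by
  simp only [switch, fromEdgeSet_adj, Set.mem_union, Set.mem_sdiff, Set.mem_insert_iff,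
    Set.mem_singleton_iff, mem_edgeSet, not_or, ne_eq]

lemma edgeSet_switch (hxw : x ≠ w) (hyz : y ≠ z) :
    (G.switch x y w z).edgeSet = (G.edgeSet \ {s(x, y), s(w, z)}) ∪ {s(x, w), s(y, z)} := by
  rw [switch, edgeSet_fromEdgeSet, sdiff_eq_self_iff_disjoint, Set.disjoint_right]
  rintro e (he | he | he) hdiag
  · exact G.not_isDiag_of_mem_edgeSet he.1 hdiag
  · exact hxw (Sym2.mk_isDiag_iff.mp (he ▸ hdiag))
  · exact hyz (Sym2.mk_isDiag_iff.mp ((Set.mem_singleton_iff.mp he) ▸ hdiag))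

lemma switch_adj_of_adj (hab : G.Adj a b) (hxy : s(a, b) ≠ s(x, y)) (hwz : s(a, b) ≠ s(w, z)) :
    (G.switch x y w z).Adj a b :=
  switch_adj.mpr ⟨Or.inl ⟨hab, hxy, hwz⟩, hab.ne⟩

lemma not_switch_adj (hyw : y ≠ w) (hxz : x ≠ z) : ¬(G.switch x y w z).Adj x y := by
  rw [switch_adj]
  rintro ⟨⟨-, hxy, -⟩ | hxw | hyz, -⟩
  · exact hxy rfl
  · exact hyw (Sym2.congr_right.mp hxw)
  · rcases Sym2.eq_iff.mp hyz with ⟨h, h'⟩ | ⟨h, -⟩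
    · exact hxz (h.trans h')
    · exact hxz h

lemma neighborSet_switch (hx : a ≠ x) (hy : a ≠ y) (hw : a ≠ w) (hz : a ≠ z) :
    (G.switch x y w z).neighborSet a = G.neighborSet a := by
  ext b
  have hne {p q : V} (hp : a ≠ p) (hq : a ≠ q) : s(a, b) ≠ s(p, q) := fun h =>
    (Sym2.mem_iff.mp (h ▸ Sym2.mem_mk_left a b)).elim hp hq
  simp only [mem_neighborSet, switch_adj]
  constructor
  · rintro ⟨⟨hab, -⟩ | h | h, -⟩
    · exact hab
    · exact absurd h (hne hx hw)
    · exact absurd h (hne hy hz)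
  · intro hab
    exact ⟨Or.inl ⟨hab, hne hx hy, hne hw hz⟩, hab.ne⟩

lemma mk_ne_of_notMem {S : Set V} (ha : a ∈ S) (hb : b ∈ S) (h : x ∉ S ∨ y ∉ S) :
    s(a, b) ≠ s(x, y) := by
  rintro heq
  rcases Sym2.eq_iff.mp heq with ⟨rfl, rfl⟩ | ⟨rfl, rfl⟩ <;> tauto

lemma switch_adj_iff_of_mem {S : Set V} (ha : a ∈ S) (hb : b ∈ S) (hy : y ∉ S)
    (hwz : w ∉ S ∨ z ∉ S) :
    (G.switch x y w z).Adj a b ↔ G.Adj a b ∨ (s(a, b) = s(x, w) ∧ a ≠ b) := by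
  have hxy := mk_ne_of_notMem (x := x) ha hb (Or.inr hy)
  have hwz := mk_ne_of_notMem ha hb hwz
  have hyz := mk_ne_of_notMem (y := z) ha hb (Or.inl hy)
  rw [switch_adj]
  constructor
  · rintro ⟨⟨hab, -⟩ | h | h, hne⟩
    · exact Or.inl hab
    · exact Or.inr ⟨h, hne⟩
    · exact absurd h hyz
  · rintro (hab | ⟨h, hne⟩)
    · exact ⟨Or.inl ⟨hab, hxy, hwz⟩, hab.ne⟩
    · exact ⟨Or.inr (Or.inl h), hne⟩

end Switch

end SimpleGraph

namespace RegularDeg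

variable {V : Type*} [Finite V] {G : SimpleGraph V} {d : ℕ}

lemma exists_adj_notMem (hreg : RegularDeg G d) (c : V) {s : Set V} (hs : s.ncard < d) :
    ∃ q, G.Adj c q ∧ q ∉ s := by
  by_contra! h
  have := Set.ncard_le_ncard (s := G.neighborSet c) (fun q hq => h q hq) (Set.toFinite s)
  rw [hreg c] at this
  omega

lemma ncard_closedNbhd (hreg : RegularDeg G d) (v : V) : (G.closedNbhd v).ncard = d + 1 := by
  rw [closedNbhd, Set.ncard_insert_of_notMem G.notMem_neighborSet_self, hreg v]

lemma exists_adj_notMem_closedNbhd (hreg : RegularDeg G d) {a c x y : V}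
    (hx : x ∈ G.closedNbhd a) (hy : y ∈ G.closedNbhd a) (hxy : x ≠ y)
    (hcx : ¬G.Adj c x) (hcy : ¬G.Adj c y) : ∃ p, G.Adj c p ∧ p ∉ G.closedNbhd a := by
  have hcard : (G.closedNbhd a \ {x, y}).ncard = d - 1 := by
    rw [Set.ncard_sdiff (Set.insert_subset hx (Set.singleton_subset_iff.mpr hy)),
      hreg.ncard_closedNbhd, Set.ncard_pair hxy]
    omega
  have hd : 1 ≤ d := by
    have := Set.ncard_le_ncard (Set.insert_subset hx (Set.singleton_subset_iff.mpr hy))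
    rw [Set.ncard_pair hxy, hreg.ncard_closedNbhd] at this
    omega
  obtain ⟨p, hcp, hp⟩ := hreg.exists_adj_notMem c (hcard.trans_lt (by omega))
  refine ⟨p, hcp, fun hpa => hp ⟨hpa, ?_⟩⟩
  rintro (rfl | rfl) <;> contradiction

lemma exists_adj_notMem_closedNbhd_pair (hreg : RegularDeg G d) (hcard : 2 * d + 1 < Nat.card V)
    {v w y z : V} (hyz : G.Adj y z) (hwv : w ∈ G.closedNbhd v) (hwz : w ∈ G.closedNbhd z) :
    ∃ p q, G.Adj p q ∧ p ∉ G.closedNbhd y ∧ q ∉ G.closedNbhd z ∧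
      (p ∉ G.closedNbhd v ∨ q ∉ G.closedNbhd v) := by
  have hunion : (G.closedNbhd v ∪ G.closedNbhd z).ncard ≤ 2 * d + 1 := by
    have := Set.ncard_union_add_ncard_inter (G.closedNbhd v) (G.closedNbhd z)
    have := (Set.ncard_pos (s := G.closedNbhd v ∩ G.closedNbhd z)).mpr ⟨w, hwv, hwz⟩
    rw [hreg.ncard_closedNbhd, hreg.ncard_closedNbhd] at *
    omega
  obtain ⟨c, hc⟩ := (Set.ne_univ_iff_exists_notMem (G.closedNbhd v ∪ G.closedNbhd z)).mp
    fun h => by rw [h, Set.ncard_univ] at hunion; omega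
  rw [Set.mem_union, not_or] at hc
  obtain ⟨hcv, hcz⟩ := hc
  by_cases hcy : G.Adj c y
  · obtain ⟨p, hcp, hp⟩ := hreg.exists_adj_notMem_closedNbhd (a := y) (x := c) (y := z)
      (Or.inr hcy.symm) (Or.inr hyz) (fun h => hcz (Or.inl h)) (G.irrefl)
      (fun h => hcz (Or.inr h.symm))
    exact ⟨p, c, hcp.symm, hp, hcz, Or.inr hcv⟩
  · obtain ⟨q, hcq, hq⟩ := hreg.exists_adj_notMem_closedNbhd (a := z) (x := z) (y := y)
      (Or.inl rfl) (Or.inr hyz.symm) hyz.ne' (fun h => hcz (Or.inr h.symm)) hcy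
    refine ⟨c, q, hcq, ?_, hq, Or.inl hcv⟩
    rintro (rfl | hyc)
    · exact hcz (Or.inr hyz.symm)
    · exact hcy hyc.symm

end RegularDeg

namespace SimpleGraph

variable {V : Type*} {G : SimpleGraph V}

structure AgreesAround (H G : SimpleGraph V) (v : V) : Prop where
  neighborSet_eq : H.neighborSet v = G.neighborSet v
  adj_iff : ∀ a ∈ G.neighborSet v, ∀ b ∈ G.neighborSet v, H.Adj a b ↔ G.Adj a b

lemma agreesAround_switch {v x y w z : V} (hx : x ∉ G.closedNbhd v) (hy : y ∉ G.closedNbhd v)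
    (hwz : G.Adj w z) (hfar : w ∉ G.closedNbhd v ∨ z ∉ G.closedNbhd v) :
    (G.switch x y w z).AgreesAround G v := by
  have hne {t : V} (ht : t ∉ G.closedNbhd v) : v ≠ t := fun h => ht (Or.inl h.symm)
  have hwv : v ≠ w := by rintro rfl; exact hfar.elim (· (Or.inl rfl)) (· (Or.inr hwz))
  have hzv : v ≠ z := by rintro rfl; exact hfar.elim (· (Or.inr hwz.symm)) (· (Or.inl rfl))
  refine ⟨neighborSet_switch (hne hx) (hne hy) hwv hzv, fun a ha b hb => ?_⟩
  have hfar' : w ∉ G.neighborSet v ∨ z ∉ G.neighborSet v :=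
    hfar.imp (fun h hw => h (Or.inr hw)) (fun h hz => h (Or.inr hz))
  rw [switch_adj_iff_of_mem ha hb (fun h => hy (Or.inr h)) hfar',
    or_iff_left fun h => mk_ne_of_notMem ha hb (Or.inl fun h' => hx (Or.inr h')) h.1]

structure DeltaPlusFrame (G : SimpleGraph V) (v u w z : V) : Prop where
  adj_vu : G.Adj v u
  adj_vw : G.Adj v w
  ne_wu : w ≠ u
  not_adj_uw : ¬G.Adj u w
  adj_wz : G.Adj w z
  z_notMem : z ∉ G.closedNbhd v

lemma DeltaPlusFrame.ne_uz {v u w z : V} (hF : G.DeltaPlusFrame v u w z) : u ≠ z :=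
  fun e => hF.not_adj_uw (e ▸ hF.adj_wz.symm)

/-- A Δ⁺-switch centred at `v` with `x = u`: it breaks `uy`, `wz` and creates `uw`, `yz`. -/
structure DeltaPlusConfig (G : SimpleGraph V) (v u w y z : V) : Prop
    extends G.DeltaPlusFrame v u w z where
  adj_uy : G.Adj u y
  y_notMem : y ∉ G.closedNbhd v
  ne_yz : y ≠ z
  not_adj_yz : ¬G.Adj y z

namespace DeltaPlusConfig

variable {v u w y z : V}

lemma deltaPlusSwitch (h : G.DeltaPlusConfig v u w y z) : DeltaPlusSwitch G (G.switch u y w z) := by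
  have hyv : y ≠ v := fun e => h.y_notMem (Or.inl e)
  have hzv : z ≠ v := fun e => h.z_notMem (Or.inl e)
  have hwy : w ≠ y := fun e => h.y_notMem (Or.inr (e ▸ h.adj_vw))
  have hwz : w ≠ z := fun e => h.z_notMem (Or.inr (e ▸ h.adj_vw))
  refine ⟨v, w, u, y, z, ?_, h.adj_vu, h.adj_vw, h.adj_uy, h.adj_wz, h.not_adj_uw, h.not_adj_yz,
    edgeSet_switch h.ne_wu.symm h.ne_yz⟩
  simp [h.adj_vu.ne, h.adj_vw.ne, hyv.symm, hzv.symm, h.ne_wu, hwy, hwz, h.adj_uy.ne, h.ne_uz,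
    h.ne_yz]

lemma neighborSet_switch (h : G.DeltaPlusConfig v u w y z) :
    (G.switch u y w z).neighborSet v = G.neighborSet v :=
  SimpleGraph.neighborSet_switch h.adj_vu.ne (fun e => h.y_notMem (Or.inl e.symm)) h.adj_vw.ne
    (fun e => h.z_notMem (Or.inl e.symm))

lemma switch_adj_iff (h : G.DeltaPlusConfig v u w y z) {a b : V} (ha : a ∈ G.neighborSet v)
    (hb : b ∈ G.neighborSet v) :
    (G.switch u y w z).Adj a b ↔ G.Adj a b ∨ s(a, b) = s(u, w) := by
  rw [switch_adj_iff_of_mem ha hb (fun hy => h.y_notMem (Or.inr hy))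
    (Or.inr fun hz => h.z_notMem (Or.inr hz))]
  refine or_congr_right ⟨And.left, fun huw => ⟨huw, ?_⟩⟩
  rintro rfl
  exact h.ne_wu (Sym2.mk_isDiag_iff.mp (huw ▸ Sym2.mk_isDiag_iff.mpr rfl)).symm

end DeltaPlusConfig

lemma DeltaPlusFrame.deltaPlusConfig_switch {v u w y z p q : V} (hF : G.DeltaPlusFrame v u w z)
    (huy : G.Adj u y) (hy : y ∉ G.closedNbhd v) (hyz : G.Adj y z) (hpq : G.Adj p q)
    (hfar : p ∉ G.closedNbhd v ∨ q ∉ G.closedNbhd v) (hp : p ∉ G.closedNbhd y)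
    (hq : q ∉ G.closedNbhd z) :
    (G.switch y z p q).AgreesAround G v ∧ (G.switch y z p q).DeltaPlusConfig v u w y z := by
  obtain ⟨hN, hagree⟩ := agreesAround_switch hy hF.z_notMem hpq hfar
  have hadjv {t : V} : (G.switch y z p q).Adj v t ↔ G.Adj v t := by
    rw [← mem_neighborSet, hN, mem_neighborSet]
  have hmemN {t : V} : t ∈ (G.switch y z p q).closedNbhd v ↔ t ∈ G.closedNbhd v := by
    rw [closedNbhd, closedNbhd, hN]
  have hwy : w ≠ y := fun e => hy (Or.inr (e ▸ hF.adj_vw))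
  refine ⟨⟨hN, hagree⟩, ⟨?_, ?_, hF.ne_wu, ?_, ?_, ?_⟩, ?_, ?_, hyz.ne, ?_⟩
  · exact hadjv.mpr hF.adj_vu
  · exact hadjv.mpr hF.adj_vw
  · rw [hagree u hF.adj_vu w hF.adj_vw]; exact hF.not_adj_uw
  · exact switch_adj_of_adj hF.adj_wz (fun e => hwy (Sym2.congr_left.mp e))
      (mk_ne_of_notMem (Or.inr hF.adj_wz.symm) (Or.inl rfl) (Or.inr hq))
  · exact hmemN.not.mpr hF.z_notMem
  · exact switch_adj_of_adj huy (fun e => hF.ne_uz (Sym2.congr_left.mp (e.trans Sym2.eq_swap)))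
      (mk_ne_of_notMem (Or.inr huy.symm) (Or.inl rfl) (Or.inl hp))
  · exact hmemN.not.mpr hy
  · exact not_switch_adj (fun e => hp (Or.inr (e ▸ hyz))) (fun e => hq (Or.inr (e ▸ hyz.symm)))

lemma exists_deltaPlusFrame [Finite V] {d : ℕ} (hreg : RegularDeg G d) (hd : 2 ≤ d) {v u : V}
    (hu : G.Adj v u) (hiso : ∀ w ∈ G.neighborSet v, ¬G.Adj u w) :
    ∃ w z, G.DeltaPlusFrame v u w z := by
  obtain ⟨w, hvw, hwu⟩ := hreg.exists_adj_notMem v (s := {u})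
    (by rw [Set.ncard_singleton]; omega)
  have huw : ¬G.Adj u w := hiso w hvw
  obtain ⟨z, hwz, hz⟩ := hreg.exists_adj_notMem_closedNbhd (a := v) (Or.inr hu) (Or.inr hvw)
    (fun e => hwu e.symm) (fun h => huw h.symm) G.irrefl
  exact ⟨w, z, hu, hvw, hwu, huw, hwz, hz⟩

namespace DeltaPlusFrame

variable [Finite V] {d : ℕ} {v u w z : V}

lemma exists_deltaMinusSwitch (hF : G.DeltaPlusFrame v u w z) (hreg : RegularDeg G d)
    (hcard : 2 * d + 1 < Nat.card V) {y c : V} (huy : G.Adj u y) (hy : y ∉ G.closedNbhd v)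
    (hyz : G.Adj y z) (hcy : G.Adj c y) (hcz : G.Adj c z) :
    ∃ H, DeltaMinusSwitch G H ∧ H.AgreesAround G v ∧ H.DeltaPlusConfig v u w y z := by
  obtain ⟨p, q, hpq, hp, hq, hfar⟩ := hreg.exists_adj_notMem_closedNbhd_pair hcard hyz
    (Or.inr hF.adj_vw) (Or.inr hF.adj_wz.symm)
  have hcp := ne_of_mem_of_not_mem (show c ∈ G.closedNbhd y from Or.inr hcy.symm) hp
  have hcq := ne_of_mem_of_not_mem (show c ∈ G.closedNbhd z from Or.inr hcz.symm) hq
  have hzp := ne_of_mem_of_not_mem (show z ∈ G.closedNbhd y from Or.inr hyz) hp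
  have hyq := ne_of_mem_of_not_mem (show y ∈ G.closedNbhd z from Or.inr hyz.symm) hq
  have hyp := ne_of_mem_of_not_mem (show y ∈ G.closedNbhd y from Or.inl rfl) hp
  have hzq := ne_of_mem_of_not_mem (show z ∈ G.closedNbhd z from Or.inl rfl) hq
  refine ⟨G.switch y z p q, ⟨c, z, y, p, q, ?_, hcy, hcz, hyz, hpq, fun h => hp (Or.inr h),
    fun h => hq (Or.inr h), edgeSet_switch hyp hzq⟩,
    hF.deltaPlusConfig_switch huy hy hyz hpq hfar hp hq⟩
  simp [hcz.ne, hcy.ne, hcp, hcq, hyz.ne.symm, hzp, hzq, hyp, hyq, hpq.ne]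

lemma exists_deltaPlusSwitch (hF : G.DeltaPlusFrame v u w z) (hd : 3 ≤ d) (hreg : RegularDeg G d)
    (hout : ∀ y, G.Adj u y → y ≠ v → y ∉ G.closedNbhd v)
    (hadjz : ∀ y, G.Adj u y → y ≠ v → y ≠ z → G.Adj y z)
    (hnotri : ∀ y c, G.Adj u y → y ≠ v → y ≠ z → G.Adj c y → ¬G.Adj c z) :
    ∃ H y, DeltaPlusSwitch G H ∧ H.AgreesAround G v ∧ H.DeltaPlusConfig v u w y z := by
  have hpair {a b : V} : ({a, b} : Set V).ncard < d :=
    (Set.ncard_insert_le a {b}).trans_lt (by rw [Set.ncard_singleton]; omega)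
  have huz : ¬G.Adj u z := by
    intro huz
    obtain ⟨y, huy, hy⟩ := hreg.exists_adj_notMem u (hpair (a := v) (b := z))
    simp only [Set.mem_insert_iff, Set.mem_singleton_iff, not_or] at hy
    exact hnotri y u huy hy.1 hy.2 huy huz
  have hne_z {y : V} (huy : G.Adj u y) : y ≠ z := fun e => huz (e ▸ huy)
  obtain ⟨y, huy, hyv⟩ := hreg.exists_adj_notMem u (s := {v})
    (by rw [Set.ncard_singleton]; omega)
  obtain ⟨y₂, huy₂, hy₂⟩ := hreg.exists_adj_notMem u (hpair (a := v) (b := y))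
  simp only [Set.mem_insert_iff, Set.mem_singleton_iff, not_or] at hyv hy₂
  obtain ⟨hy₂v, hy₂y⟩ := hy₂
  have hyz := hadjz y huy hyv (hne_z huy)
  have hy₂z := hadjz y₂ huy₂ hy₂v (hne_z huy₂)
  have hyy₂ : ¬G.Adj y y₂ := fun h => hnotri y y₂ huy hyv (hne_z huy) h.symm hy₂z
  obtain ⟨q, hy₂q, hq⟩ := hreg.exists_adj_notMem y₂ (hpair (a := u) (b := z))
  simp only [Set.mem_insert_iff, Set.mem_singleton_iff, not_or] at hq
  have hzq : ¬G.Adj z q := fun h => hnotri y₂ q huy₂ hy₂v (hne_z huy₂) hy₂q.symm h.symm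
  have hyq : y ≠ q := by rintro rfl; exact hyy₂ hy₂q.symm
  refine ⟨G.switch y z y₂ q, y, ⟨u, y₂, y, z, q, ?_, huy, huy₂, hyz, hy₂q, hyy₂, hzq,
    edgeSet_switch (Ne.symm hy₂y) (Ne.symm hq.2)⟩,
    hF.deltaPlusConfig_switch huy (hout y huy hyv) hyz hy₂q (Or.inl (hout y₂ huy₂ hy₂v))
      (by rintro (h | h); exacts [hy₂y h, hyy₂ h])
      (by rintro (h | h); exacts [hq.2 h, hzq h])⟩
  simp [huy₂.ne, huy.ne, hF.ne_uz, Ne.symm hq.1, hy₂y, hy₂z.ne, hy₂q.ne, hyz.ne, hyq,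
    Ne.symm hq.2]

lemma exists_deltaSwitch (hF : G.DeltaPlusFrame v u w z) (hd : 3 ≤ d) (hreg : RegularDeg G d)
    (hcard : 2 * d + 1 < Nat.card V) (hout : ∀ y, G.Adj u y → y ≠ v → y ∉ G.closedNbhd v)
    (hadjz : ∀ y, G.Adj u y → y ≠ v → y ≠ z → G.Adj y z) :
    ∃ H y, DeltaSwitch G H ∧ H.AgreesAround G v ∧ H.DeltaPlusConfig v u w y z := by
  by_cases htri : ∃ y c, G.Adj u y ∧ y ≠ v ∧ y ≠ z ∧ G.Adj c y ∧ G.Adj c z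
  · obtain ⟨y, c, huy, hyv, hyz, hcy, hcz⟩ := htri
    obtain ⟨H, hGH, hH⟩ := hF.exists_deltaMinusSwitch hreg hcard huy (hout y huy hyv)
      (hadjz y huy hyv hyz) hcy hcz
    exact ⟨H, y, Or.inr hGH, hH⟩
  · push Not at htri
    obtain ⟨H, y, hGH, hH⟩ := hF.exists_deltaPlusSwitch hd hreg hout hadjz htri
    exact ⟨H, y, Or.inl hGH, hH⟩

end DeltaPlusFrame

end SimpleGraph

/-- If `v` lies in a component of size at least `2(d+1)` of a `d`-regular graph
`G` (`d ≥ 3`) and `u ∈ N_G(v)` has no neighbour inside `N_G(v)`, then at most two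
Δ-switches give a graph `G'` with `N_{G'}(v) = N_G(v)` whose edges inside
`N_G(v)` are those of `G` plus exactly one new edge incident with `u`. -/
theorem insert_edge_at_isolated_neighbor {V : Type*} [Fintype V] {d : ℕ}
    (hd : 3 ≤ d) (G : SimpleGraph V) (hreg : RegularDeg G d) (v : V)
    (hC : 2 * (d + 1) ≤ {x : V | G.Reachable v x}.ncard)
    (u : V) (hu : u ∈ G.neighborSet v)
    (hiso : ∀ w ∈ G.neighborSet v, ¬ G.Adj u w) :
    ∃ G' : SimpleGraph V,
      (∃ H : SimpleGraph V, (H = G ∨ DeltaSwitch G H) ∧ (G' = H ∨ DeltaSwitch H G')) ∧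
      G'.neighborSet v = G.neighborSet v ∧
      (∃ w ∈ G.neighborSet v, w ≠ u ∧ G'.Adj u w ∧
        ∀ a ∈ G.neighborSet v, ∀ b ∈ G.neighborSet v,
          (G'.Adj a b ↔ (G.Adj a b ∨ (a = u ∧ b = w) ∨ (a = w ∧ b = u)))) := by
  have hcard : 2 * d + 1 < Nat.card V := by
    have := Set.ncard_le_card {x | G.Reachable v x}
    omega
  have hout (y : V) (huy : G.Adj u y) (hyv : y ≠ v) : y ∉ G.closedNbhd v :=
    fun hy => hy.elim hyv fun hvy => hiso y hvy huy
  obtain ⟨w, z, hF⟩ := exists_deltaPlusFrame hreg (by omega) hu hiso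
  obtain ⟨H, y, hGH, ⟨hN, hagree⟩, hcfg⟩ : ∃ H y, (H = G ∨ DeltaSwitch G H) ∧
      H.AgreesAround G v ∧ H.DeltaPlusConfig v u w y z := by
    by_cases hgood : ∃ y, G.DeltaPlusConfig v u w y z
    · obtain ⟨y, hy⟩ := hgood
      exact ⟨G, y, Or.inl rfl, ⟨rfl, fun _ _ _ _ => Iff.rfl⟩, hy⟩
    · have hadjz (y : V) (huy : G.Adj u y) (hyv : y ≠ v) (hyz : y ≠ z) : G.Adj y z :=
        by_contra fun h => hgood ⟨y, hF, huy, hout y huy hyv, hyz, h⟩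
      obtain ⟨H, y, hGH, hH⟩ := hF.exists_deltaSwitch hd hreg hcard hout hadjz
      exact ⟨H, y, Or.inr hGH, hH⟩
  have hadj {a b : V} (ha : a ∈ G.neighborSet v) (hb : b ∈ G.neighborSet v) :
      (H.switch u y w z).Adj a b ↔ G.Adj a b ∨ s(a, b) = s(u, w) := by
    rw [hcfg.switch_adj_iff (hN ▸ ha) (hN ▸ hb), hagree a ha b hb]
  refine ⟨H.switch u y w z, ⟨H, hGH, Or.inr (Or.inl hcfg.deltaPlusSwitch)⟩,
    hcfg.neighborSet_switch.trans hN, w, hF.adj_vw, hF.ne_wu,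
    (hadj hu hF.adj_vw).mpr (Or.inr rfl),
    fun a ha b hb => ?_⟩
  rw [hadj ha hb, Sym2.eq_iff]
end

section
/- Let d ≥ 3 and let G be a d-regular graph with a distinguished vertex v; write V_1 = N_G(v) and let V_2 be the set of vertices at graph distance exactly 2 from v. Suppose every vertex of V_1 has at least one neighbour in V_1. Let a, b ∈ V_2 be distinct and non-adjacent in G, and suppose there is x ∈ V_1 which is the unique neighbour of a in V_1 and also the unique neighbour of b in V_1. Then a single Δ-switch transforms G into a graph G' such that N_{G'}(v) = N_G(v), the set of edges of G' joining two vertices of V_2 equals the set of edges of G joining two vertices of V_2, a is adjacent to x in G', and b is adjacent in G' to some vertex y ∈ V_1 with y ≠ x. -/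
open SimpleGraph

private lemma exists_nonneighbor {V : Type*} [Fintype V] {d : ℕ} (hd : 3 ≤ d)
    (G : SimpleGraph V) (hreg : RegularDeg G d) (v : V)
    (a b x : V) (hva : ¬ G.Adj v a) (hvb : ¬ G.Adj v b) (hab : a ≠ b)
    (hav : a ≠ v) (hbv : b ≠ v)
    (hx : x ∈ G.neighborSet v) (hxa : G.Adj x a) (hxb : G.Adj x b) :
    ∃ u ∈ G.neighborSet v, u ≠ x ∧ ¬ G.Adj x u := by
  by_contra hcon
  push_neg at hcon
  have hsub : insert v (insert a (insert b (G.neighborSet v \ {x}))) ⊆ G.neighborSet x := by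
    intro t ht
    simp only [Set.mem_insert_iff, Set.mem_diff, Set.mem_singleton_iff] at ht
    rcases ht with rfl | rfl | rfl | ⟨htv, htx⟩
    · exact G.adj_symm hx
    · exact hxa
    · exact hxb
    · exact hcon t htv htx
  have hfin : (G.neighborSet v \ {x} : Set V).Finite := Set.toFinite _
  have h1 : (G.neighborSet v \ {x}).ncard = d - 1 := by
    rw [Set.ncard_diff_singleton_of_mem hx, hreg]
  have hbnot : b ∉ G.neighborSet v \ {x} := by
    simp only [Set.mem_diff, SimpleGraph.mem_neighborSet]
    tauto
  have hanot : a ∉ insert b (G.neighborSet v \ {x}) := by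
    simp only [Set.mem_insert_iff, Set.mem_diff, SimpleGraph.mem_neighborSet]
    tauto
  have hvnot : v ∉ insert a (insert b (G.neighborSet v \ {x})) := by
    simp only [Set.mem_insert_iff, Set.mem_diff, SimpleGraph.mem_neighborSet]
    push_neg
    refine ⟨Ne.symm hav, Ne.symm hbv, fun h => absurd h G.irrefl⟩
  have hcard : (insert v (insert a (insert b (G.neighborSet v \ {x})))).ncard = d + 2 := by
    rw [Set.ncard_insert_of_notMem hvnot (Set.toFinite _),
        Set.ncard_insert_of_notMem hanot (Set.toFinite _),
        Set.ncard_insert_of_notMem hbnot hfin, h1]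
    omega
  have := Set.ncard_le_ncard hsub (Set.toFinite _)
  rw [hcard, hreg] at this
  omega

/-- If every vertex of `V₁ = N_G(v)` has a neighbour in `V₁`, and `a, b` are
distinct non-adjacent vertices at distance `2` from `v` whose unique neighbour in
`V₁` is the same vertex `x`, then a single Δ-switch moves `b` so that it gains a
neighbour `y ∈ V₁` with `y ≠ x`, without changing `N_G(v)` or the edges inside
`V₂`. -/
theorem move_b_below_new_vertex {V : Type*} [Fintype V] {d : ℕ} (hd : 3 ≤ d)
    (G : SimpleGraph V) (hreg : RegularDeg G d) (v : V)
    (hV1 : ∀ u ∈ G.neighborSet v, ∃ w ∈ G.neighborSet v, G.Adj u w)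
    (a b : V) (ha : G.dist v a = 2) (hb : G.dist v b = 2) (hab : a ≠ b)
    (hnadj : ¬ G.Adj a b) (x : V) (hx : x ∈ G.neighborSet v)
    (hxa : G.Adj x a) (hxb : G.Adj x b)
    (huniq_a : ∀ y ∈ G.neighborSet v, G.Adj y a → y = x)
    (huniq_b : ∀ y ∈ G.neighborSet v, G.Adj y b → y = x) :
    ∃ G' : SimpleGraph V, DeltaSwitch G G' ∧
      G'.neighborSet v = G.neighborSet v ∧
      (∀ p q : V, G.dist v p = 2 → G.dist v q = 2 → (G'.Adj p q ↔ G.Adj p q)) ∧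
      G'.Adj x a ∧
      (∃ y ∈ G.neighborSet v, y ≠ x ∧ G'.Adj y b) := by
  have hvx : G.Adj v x := hx
  have dist_facts : ∀ c : V, G.dist v c = 2 → ¬ G.Adj v c ∧ c ≠ v := by
    intro c hc
    constructor
    · intro hadj
      rw [← SimpleGraph.dist_eq_one_iff_adj] at hadj
      omega
    · intro h; subst h; rw [SimpleGraph.dist_self] at hc; omega
  obtain ⟨hva, hav⟩ := dist_facts a ha
  obtain ⟨hvb, hbv⟩ := dist_facts b hb
  obtain ⟨u, hu, hux, hxu⟩ :=
    exists_nonneighbor hd G hreg v a b x hva hvb hab hav hbv hx hxa hxb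
  obtain ⟨w, hw, huw⟩ := hV1 u hu
  have hwx : w ≠ x := by rintro rfl; exact hxu (G.adj_symm huw)
  have hwb : ¬ G.Adj w b := fun h => hwx (huniq_b w hw h)
  have hwbne : w ≠ b := by rintro rfl; exact hvb hw
  have hubne : u ≠ b := by rintro rfl; exact hvb hu
  have hxbne : x ≠ b := hxb.ne
  have hxane : x ≠ a := hxa.ne
  have hvu : v ≠ u := fun h => G.irrefl (h ▸ hu)
  have hvw : v ≠ w := fun h => G.irrefl (h ▸ hw)
  have hvxne : v ≠ x := fun h => G.irrefl (h ▸ hx)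
  have huwne : u ≠ w := huw.ne
  set S : Set (Sym2 V) := (G.edgeSet \ {s(u, w), s(x, b)}) ∪ {s(u, x), s(w, b)} with hS
  have hedge : (SimpleGraph.fromEdgeSet S).edgeSet = S := by
    rw [SimpleGraph.edgeSet_fromEdgeSet]
    ext e
    constructor
    · exact fun he => he.1
    · intro he
      refine ⟨he, fun hdiag => ?_⟩
      replace hdiag : e.IsDiag := hdiag
      simp only [hS, Set.mem_union, Set.mem_diff, Set.mem_insert_iff,
        Set.mem_singleton_iff] at he
      rcases he with ⟨hG, _⟩ | rfl | rfl
      · exact G.not_isDiag_of_mem_edgeSet hG hdiag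
      · exact hux (Sym2.mk_isDiag_iff.1 hdiag)
      · exact hwbne (Sym2.mk_isDiag_iff.1 hdiag)
  have hadj : ∀ p q : V, (SimpleGraph.fromEdgeSet S).Adj p q ↔ (s(p, q) ∈ S ∧ p ≠ q) :=
    fun p q => SimpleGraph.fromEdgeSet_adj S
  refine ⟨SimpleGraph.fromEdgeSet S, ?_, ?_, ?_, ?_, ?_⟩
  · -- Δ⁻-switch with (v, w, u, x, b)
    right
    refine ⟨v, w, u, x, b, ?_, hu, hw, huw, hxb, fun h => hxu (G.adj_symm h), hwb, hedge⟩
    refine List.Pairwise.cons ?_ (List.Pairwise.cons ?_ (List.Pairwise.cons ?_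
      (List.Pairwise.cons ?_ (List.Pairwise.cons ?_ List.Pairwise.nil)))) <;>
      (intro t ht; fin_cases ht) <;>
      first | exact hvw | exact hvu | exact hvxne | exact Ne.symm hbv
            | exact Ne.symm huwne | exact hwx | exact hwbne
            | exact hux | exact hubne | exact hxbne
  · -- neighborSet v unchanged
    ext t
    simp only [SimpleGraph.mem_neighborSet, hadj]
    constructor
    · rintro ⟨hmem, hne⟩
      simp only [hS, Set.mem_union, Set.mem_diff, Set.mem_insert_iff,
        Set.mem_singleton_iff, Sym2.eq_iff] at hmem
      rcases hmem with ⟨hG, _⟩ | (⟨rfl, rfl⟩ | ⟨rfl, rfl⟩) | (⟨rfl, rfl⟩ | ⟨rfl, rfl⟩)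
      exacts [hG, absurd rfl hvu, absurd rfl hvxne, absurd rfl hvw, absurd rfl (Ne.symm hbv)]
    · intro hG
      refine ⟨Or.inl ⟨hG, ?_⟩, hG.ne⟩
      intro hcon
      simp only [Set.mem_insert_iff, Set.mem_singleton_iff, Sym2.eq_iff] at hcon
      rcases hcon with (⟨h1, h2⟩ | ⟨h1, h2⟩) | (⟨h1, h2⟩ | ⟨h1, h2⟩)
      exacts [hvu h1, hvw h1, hvxne h1, hbv h1.symm]
  · -- edges inside V₂ unchanged
    intro p q hp hq
    obtain ⟨hvp, hpv⟩ := dist_facts p hp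
    obtain ⟨hvq, hqv⟩ := dist_facts q hq
    have hpN : ∀ c : V, c ∈ G.neighborSet v → p ≠ c := fun c hc h => hvp (h ▸ hc)
    have hqN : ∀ c : V, c ∈ G.neighborSet v → q ≠ c := fun c hc h => hvq (h ▸ hc)
    rw [hadj]
    constructor
    · rintro ⟨hmem, hne⟩
      simp only [hS, Set.mem_union, Set.mem_diff, Set.mem_insert_iff,
        Set.mem_singleton_iff, Sym2.eq_iff] at hmem
      rcases hmem with ⟨hG, _⟩ | (⟨h1, h2⟩ | ⟨h1, h2⟩) | (⟨h1, h2⟩ | ⟨h1, h2⟩)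
      exacts [hG, absurd h1 (hpN u hu), absurd h1 (hpN x hx),
        absurd h1 (hpN w hw), absurd h2 (hqN w hw)]
    · intro hG
      refine ⟨Or.inl ⟨hG, ?_⟩, hG.ne⟩
      intro hcon
      simp only [Set.mem_insert_iff, Set.mem_singleton_iff, Sym2.eq_iff] at hcon
      rcases hcon with (⟨h1, h2⟩ | ⟨h1, h2⟩) | (⟨h1, h2⟩ | ⟨h1, h2⟩)
      exacts [hpN u hu h1, hpN w hw h1, hpN x hx h1, hqN x hx h2]
  · -- x–a still an edge
    rw [hadj]
    refine ⟨Or.inl ⟨hxa, ?_⟩, hxa.ne⟩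
    intro hcon
    simp only [Set.mem_insert_iff, Set.mem_singleton_iff, Sym2.eq_iff] at hcon
    rcases hcon with (⟨h1, h2⟩ | ⟨h1, h2⟩) | (⟨h1, h2⟩ | ⟨h1, h2⟩)
    exacts [hux h1.symm, hwx h1.symm, hab h2, hxbne h1]
  · -- new neighbour w of b
    refine ⟨w, hw, hwx, ?_⟩
    rw [hadj]
    exact ⟨Or.inr (Or.inr rfl), hwbne⟩
end

section
/- Let d ≥ 3 and let G be a d-regular graph with a distinguished vertex v; write V_1 = N_G(v) and let V_2 be the set of vertices at graph distance exactly 2 from v. Let xy be an edge of G with x, y ∈ V_1 such that y has at least one neighbour in V_2. Then a single Δ-switch transforms G into a graph G' such that N_{G'}(v) = N_G(v), xy is not an edge of G', the set of edges of G' joining two vertices of V_2 equals the set of edges of G joining two vertices of V_2, and the number of edges of G' joining two vertices of V_1 is at least the number of edges of G joining two vertices of V_1. -/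
open SimpleGraph

/-- If `xy` is an edge inside `V₁ = N_G(v)` and `y` has a neighbour at distance
`2` from `v`, then a single Δ-switch makes `xy` a non-edge without changing
`N_G(v)`, without changing the edges inside `V₂`, and without decreasing the
number of edges inside `V₁`. -/
lemma exists_good_pair {V : Type*} [Fintype V] {d : ℕ} {G : SimpleGraph V}
    (hreg : RegularDeg G d) {v x y w : V}
    (hx : G.Adj v x) (hy : G.Adj v y) (hxy : G.Adj x y)
    (hyw : G.Adj y w) (hvw : ¬ G.Adj v w) (hwv : w ≠ v) :
    ∃ a b, G.Adj a b ∧ ¬G.Adj x a ∧ ¬G.Adj y b ∧ a ≠ x ∧ b ≠ y ∧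
      (G.Adj v a ∨ G.Adj v b) := by
  classical
  by_contra hcon
  push_neg at hcon
  -- hcon : ∀ a b, Adj a b → ¬Adj x a → ¬Adj y b → a ≠ x → b ≠ y → ¬Adj v a ∧ ¬Adj v b
  have hd1 : 1 ≤ d := by
    rw [← hreg v]
    exact (Set.ncard_pos (Set.toFinite _)).2 ⟨x, hx⟩
  -- Step 1: find b₀ ∈ N(v) with ¬ Adj y b₀ and b₀ ≠ y
  have hstep1 : ∃ b₀, G.Adj v b₀ ∧ ¬ G.Adj y b₀ ∧ b₀ ≠ y := by
    by_contra hB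
    push_neg at hB
    -- then N(y) ⊇ insert v (insert w (N(v) \ {y}))
    have hsub : insert v (insert w (G.neighborSet v \ {y})) ⊆ G.neighborSet y := by
      rintro u hu
      rcases hu with rfl | hu
      · exact hy.symm
      rcases hu with rfl | hu
      · exact hyw
      · by_contra h
        exact hu.2 (hB u hu.1 h)
    have h1 : (G.neighborSet v \ {y}).ncard = d - 1 := by
      rw [Set.ncard_diff_singleton_of_mem (show y ∈ G.neighborSet v from hy), hreg v]
    have hvn : v ∉ insert w (G.neighborSet v \ {y}) := by
      simp only [Set.mem_insert_iff, Set.mem_diff, Set.mem_singleton_iff]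
      push_neg
      exact ⟨hwv.symm, fun hv => (G.irrefl hv).elim⟩
    have hwn : w ∉ G.neighborSet v \ {y} := fun h => hvw h.1
    have hcard : (insert v (insert w (G.neighborSet v \ {y}))).ncard = d + 1 := by
      rw [Set.ncard_insert_of_notMem hvn (Set.toFinite _),
        Set.ncard_insert_of_notMem hwn (Set.toFinite _), h1]
      omega
    have := Set.ncard_le_ncard hsub (Set.toFinite _)
    rw [hcard, hreg y] at this
    omega
  obtain ⟨b₀, hvb₀, hyb₀, hb₀y⟩ := hstep1
  have hb₀x : b₀ ≠ x := fun h => hyb₀ (h ▸ hxy.symm)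
  -- Step 2: N(b₀) ⊆ insert x (N(x))
  have hNb₀ : G.neighborSet b₀ ⊆ insert x (G.neighborSet x) := by
    intro c hc
    by_contra hcn
    simp only [Set.mem_insert_iff, mem_neighborSet] at hcn
    push_neg at hcn
    exact (hcon c b₀ ((G.mem_neighborSet b₀ c).1 hc).symm hcn.2 hyb₀ hcn.1 hb₀y).2 hvb₀
  by_cases hxb₀ : G.Adj x b₀
  · -- Step 3
    have hsub : G.neighborSet b₀ ⊆ insert x (G.neighborSet x) \ {b₀} := by
      intro c hc
      exact ⟨hNb₀ hc, fun h => G.irrefl (h ▸ ((G.mem_neighborSet b₀ c).1 hc))⟩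
    have hxx : x ∉ G.neighborSet x := fun h => G.irrefl h
    have hb₀mem : b₀ ∈ insert x (G.neighborSet x) := Set.mem_insert_of_mem _ hxb₀
    have hc1 : (insert x (G.neighborSet x) \ {b₀}).ncard = d := by
      rw [Set.ncard_diff_singleton_of_mem hb₀mem,
        Set.ncard_insert_of_notMem hxx (Set.toFinite _), hreg x]
      omega
    have heq : G.neighborSet b₀ = insert x (G.neighborSet x) \ {b₀} :=
      Set.eq_of_subset_of_ncard_le hsub (by rw [hc1, hreg b₀]) (Set.toFinite _)
    have hymem : y ∈ insert x (G.neighborSet x) \ {b₀} :=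
      ⟨Set.mem_insert_of_mem _ hxy, fun h => hb₀y (h.symm)⟩
    rw [← heq, mem_neighborSet] at hymem
    exact hyb₀ hymem.symm
  · -- Step 4
    have hNb₀' : G.neighborSet b₀ ⊆ insert y (G.neighborSet y) := by
      intro c hc
      by_contra hcn
      simp only [Set.mem_insert_iff, mem_neighborSet] at hcn
      push_neg at hcn
      exact (hcon b₀ c ((G.mem_neighborSet b₀ c).1 hc)
        (fun h => hxb₀ h) hcn.2 hb₀x hcn.1).1 hvb₀
    have hxs : x ∉ G.neighborSet b₀ := fun h => hxb₀ ((G.mem_neighborSet b₀ x).1 h).symm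
    have hys : y ∉ G.neighborSet b₀ := fun h => hyb₀ ((G.mem_neighborSet b₀ y).1 h).symm
    have hsx : G.neighborSet b₀ ⊆ G.neighborSet x := by
      intro c hc
      rcases hNb₀ hc with rfl | h
      · exact absurd hc hxs
      · exact h
    have hsy : G.neighborSet b₀ ⊆ G.neighborSet y := by
      intro c hc
      rcases hNb₀' hc with rfl | h
      · exact absurd hc hys
      · exact h
    have hex : G.neighborSet b₀ = G.neighborSet x :=
      Set.eq_of_subset_of_ncard_le hsx (by rw [hreg x, hreg b₀]) (Set.toFinite _)
    have hey : G.neighborSet b₀ = G.neighborSet y :=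
      Set.eq_of_subset_of_ncard_le hsy (by rw [hreg y, hreg b₀]) (Set.toFinite _)
    have : y ∈ G.neighborSet y := by
      rw [← hey, hex]
      exact hxy
    exact G.irrefl this

/-- main -/
theorem remove_edge_in_V1 {V : Type*} [Fintype V] {d : ℕ} (hd : 3 ≤ d)
    (G : SimpleGraph V) (hreg : RegularDeg G d) (v : V)
    (x y : V) (hx : x ∈ G.neighborSet v) (hy : y ∈ G.neighborSet v)
    (hxy : G.Adj x y) (hout : ∃ w : V, G.dist v w = 2 ∧ G.Adj y w) :
    ∃ G' : SimpleGraph V, DeltaSwitch G G' ∧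
      G'.neighborSet v = G.neighborSet v ∧
      ¬ G'.Adj x y ∧
      (∀ p q : V, G.dist v p = 2 → G.dist v q = 2 → (G'.Adj p q ↔ G.Adj p q)) ∧
      {e ∈ G.edgeSet | ∀ u ∈ e, u ∈ G.neighborSet v}.ncard ≤
        {e ∈ G'.edgeSet | ∀ u ∈ e, u ∈ G.neighborSet v}.ncard := by
  classical
  rw [mem_neighborSet] at hx hy
  obtain ⟨w, hwd, hyw⟩ := hout
  have hvw : ¬ G.Adj v w := by
    intro h
    rw [← dist_eq_one_iff_adj] at h
    omega
  have hwv : w ≠ v := by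
    rintro rfl
    simp [SimpleGraph.dist_self] at hwd
  obtain ⟨a, b, hab, hxa, hyb, hax, hby, hS⟩ :=
    exists_good_pair hreg hx hy hxy hyw hvw hwv
  -- distinctness facts
  have hvx : v ≠ x := hx.ne
  have hvy : v ≠ y := hy.ne
  have hva : v ≠ a := fun h => hxa (h ▸ hx.symm)
  have hvb : v ≠ b := fun h => hyb (h ▸ hy.symm)
  have hxyne : x ≠ y := hxy.ne
  have hya : y ≠ a := fun h => hxa (h ▸ hxy)
  have hxb : x ≠ b := fun h => hyb (h ▸ hxy.symm)
  have habne : a ≠ b := hab.ne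
  set E' : Set (Sym2 V) := (G.edgeSet \ {s(x, y), s(a, b)}) ∪ {s(x, a), s(y, b)} with hE'def
  set G' : SimpleGraph V := SimpleGraph.fromEdgeSet E' with hG'def
  have hE' : G'.edgeSet = E' := by
    rw [hG'def, edgeSet_fromEdgeSet]
    ext e
    constructor
    · exact fun h => h.1
    · intro he
      refine ⟨he, ?_⟩
      simp only [Sym2.diagSet, Set.mem_setOf_eq]
      rcases he with ⟨heG, -⟩ | he
      · exact G.not_isDiag_of_mem_edgeSet heG
      · simp only [Set.mem_insert_iff, Set.mem_singleton_iff] at he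
        rcases he with rfl | rfl
        · rw [Sym2.mk_isDiag_iff]; exact fun h => hax h.symm
        · rw [Sym2.mk_isDiag_iff]; exact fun h => hby h.symm
  have hadj : ∀ p q : V, G'.Adj p q ↔
      ((G.Adj p q ∧ ¬(s(p, q) = s(x, y) ∨ s(p, q) = s(a, b))) ∨
        (s(p, q) = s(x, a) ∨ s(p, q) = s(y, b))) := by
    intro p q
    rw [← SimpleGraph.mem_edgeSet, hE', hE'def]
    simp only [Set.mem_union, Set.mem_diff, Set.mem_insert_iff, Set.mem_singleton_iff,
      SimpleGraph.mem_edgeSet, not_or]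
  have hxays : s(x, a) ≠ s(y, b) := by
    simp only [ne_eq, Sym2.eq_iff, not_or]
    exact ⟨fun h => hxyne h.1, fun h => hxb h.1⟩
  have hxanE : s(x, a) ∉ G.edgeSet := fun h => hxa h
  have hybnE : s(y, b) ∉ G.edgeSet := fun h => hyb h
  refine ⟨G', Or.inr ⟨v, y, x, a, b, ?_, hx, hy, hxy, hab, hxa, hyb, hE'⟩, ?_, ?_, ?_, ?_⟩
  · simp only [List.pairwise_cons, List.mem_cons, List.mem_singleton, List.not_mem_nil]
    refine ⟨fun u hu => ?_, fun u hu => ?_, fun u hu => ?_, fun u hu => ?_, fun u hu => hu.elim,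
      List.Pairwise.nil⟩
    · rcases hu with rfl | rfl | rfl | rfl | h
      exacts [hvy, hvx, hva, hvb, h.elim]
    · rcases hu with rfl | rfl | rfl | h
      exacts [hxyne.symm, hya, Ne.symm hby, h.elim]
    · rcases hu with rfl | rfl | h
      exacts [hax.symm, hxb, h.elim]
    · rcases hu with rfl | h
      exacts [habne, h.elim]
  · -- neighborSet unchanged
    ext u
    simp only [mem_neighborSet]
    rw [hadj]
    constructor
    · rintro (⟨h, -⟩ | h)
      · exact h
      · rcases h with h | h <;> rw [Sym2.eq_iff] at h <;>
          rcases h with ⟨h1, h2⟩ | ⟨h1, h2⟩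
        · exact absurd h1 hvx
        · exact absurd h1 hva
        · exact absurd h1 hvy
        · exact absurd h1 hvb
    · intro h
      refine Or.inl ⟨h, ?_⟩
      rintro (h' | h') <;> rw [Sym2.eq_iff] at h' <;>
        rcases h' with ⟨h1, h2⟩ | ⟨h1, h2⟩
      · exact hvx h1
      · exact hvy h1
      · exact hva h1
      · exact hvb h1
  · -- xy no longer an edge
    rw [hadj]
    rintro (⟨-, hne⟩ | h)
    · exact hne (Or.inl rfl)
    · rcases h with h | h <;> rw [Sym2.eq_iff] at h <;>
        rcases h with ⟨h1, h2⟩ | ⟨h1, h2⟩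
      · exact hya h2
      · exact hax h1.symm
      · exact hxyne h1
      · exact hxb h1
  · -- edges inside V₂ unchanged
    intro p q hp hq
    have hvp : ¬ G.Adj v p := by
      intro h; rw [← dist_eq_one_iff_adj] at h; omega
    have hvq : ¬ G.Adj v q := by
      intro h; rw [← dist_eq_one_iff_adj] at h; omega
    have hpx : p ≠ x := fun h => hvp (h ▸ hx)
    have hpy : p ≠ y := fun h => hvp (h ▸ hy)
    have hqx : q ≠ x := fun h => hvq (h ▸ hx)
    have hqy : q ≠ y := fun h => hvq (h ▸ hy)
    have hpqab : s(p, q) ≠ s(a, b) := by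
      intro hcon
      rw [Sym2.eq_iff] at hcon
      rcases hcon with ⟨rfl, rfl⟩ | ⟨rfl, rfl⟩ <;> rcases hS with h | h
      · exact hvp h
      · exact hvq h
      · exact hvq h
      · exact hvp h
    rw [hadj]
    constructor
    · rintro (⟨h, -⟩ | h)
      · exact h
      · rcases h with h | h <;> rw [Sym2.eq_iff] at h <;>
          rcases h with ⟨h1, h2⟩ | ⟨h1, h2⟩
        · exact absurd h1 hpx
        · exact absurd h2 hqx
        · exact absurd h1 hpy
        · exact absurd h2 hqy
    · intro h
      refine Or.inl ⟨h, ?_⟩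
      rintro (h' | h')
      · rw [Sym2.eq_iff] at h'
        rcases h' with ⟨h1, h2⟩ | ⟨h1, h2⟩
        · exact hpx h1
        · exact hpy h1
      · exact hpqab h'
  · -- edge count inside V₁
    set f : Sym2 V → Sym2 V := fun e =>
      if e = s(x, y) then (if G.Adj v a then s(x, a) else s(y, b))
      else if e = s(a, b) then s(y, b) else e with hfdef
    have habxy : s(a, b) ≠ s(x, y) := by
      intro hcon
      rw [Sym2.eq_iff] at hcon
      rcases hcon with ⟨h1, h2⟩ | ⟨h1, h2⟩
      · exact hax h1
      · exact hya h1.symm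
    apply Set.ncard_le_ncard_of_injOn f ?_ ?_ (Set.toFinite _)
    · -- maps to
      rintro e ⟨heE, heP⟩
      by_cases h1 : e = s(x, y)
      · rw [hfdef]
        simp only [if_pos h1]
        by_cases h2 : G.Adj v a
        · rw [if_pos h2]
          refine ⟨?_, ?_⟩
          · rw [hE']; exact Or.inr (Or.inl rfl)
          · intro u hu
            rw [Sym2.mem_iff] at hu
            rcases hu with rfl | rfl
            · exact hx
            · exact h2
        · rw [if_neg h2]
          have hvb' : G.Adj v b := hS.resolve_left h2
          refine ⟨?_, ?_⟩
          · rw [hE']; exact Or.inr (Or.inr rfl)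
          · intro u hu
            rw [Sym2.mem_iff] at hu
            rcases hu with rfl | rfl
            · exact hy
            · exact hvb'
      · by_cases h2 : e = s(a, b)
        · rw [hfdef]
          simp only [if_neg h1, if_pos h2]
          have hvb' : G.Adj v b := by
            have := heP b (by rw [h2]; exact Sym2.mem_mk_right a b)
            exact this
          refine ⟨?_, ?_⟩
          · rw [hE']; exact Or.inr (Or.inr rfl)
          · intro u hu
            rw [Sym2.mem_iff] at hu
            rcases hu with rfl | rfl
            · exact hy
            · exact hvb'
        · rw [hfdef]
          simp only [if_neg h1, if_neg h2]
          refine ⟨?_, heP⟩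
          rw [hE']
          exact Or.inl ⟨heE, by simp [h1, h2]⟩
    · -- injective on
      rintro e1 ⟨h1E, h1P⟩ e2 ⟨h2E, h2P⟩ heq
      have key : ∀ e, e ∈ G.edgeSet → (∀ u ∈ e, u ∈ G.neighborSet v) →
          (e ≠ s(x, y) → e ≠ s(a, b) → f e = e) := by
        intro e _ _ k1 k2
        rw [hfdef]; simp [k1, k2]
      by_cases e1a : e1 = s(x, y) <;> by_cases e2a : e2 = s(x, y)
      · exact e1a.trans e2a.symm
      · by_cases e2b : e2 = s(a, b)
        · have hva' : G.Adj v a := h2P a (by rw [e2b]; exact Sym2.mem_mk_left a b)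
          rw [hfdef] at heq
          simp only [if_pos e1a, if_pos hva', if_neg e2a, if_pos e2b] at heq
          exact absurd heq hxays
        · rw [key e2 h2E h2P e2a e2b, hfdef] at heq
          simp only [if_pos e1a] at heq
          by_cases h2 : G.Adj v a
          · rw [if_pos h2] at heq
            exact absurd h2E (heq ▸ hxanE)
          · rw [if_neg h2] at heq
            exact absurd h2E (heq ▸ hybnE)
      · by_cases e1b : e1 = s(a, b)
        · have hva' : G.Adj v a := h1P a (by rw [e1b]; exact Sym2.mem_mk_left a b)
          rw [hfdef] at heq
          simp only [if_pos e2a, if_pos hva', if_neg e1a, if_pos e1b] at heq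
          exact absurd heq.symm hxays
        · rw [key e1 h1E h1P e1a e1b, hfdef] at heq
          simp only [if_pos e2a] at heq
          by_cases h2 : G.Adj v a
          · rw [if_pos h2] at heq
            exact absurd h1E (heq ▸ hxanE)
          · rw [if_neg h2] at heq
            exact absurd h1E (heq ▸ hybnE)
      · by_cases e1b : e1 = s(a, b) <;> by_cases e2b : e2 = s(a, b)
        · exact e1b.trans e2b.symm
        · rw [key e2 h2E h2P e2a e2b, hfdef] at heq
          simp only [if_neg e1a, if_pos e1b] at heq
          exact absurd h2E (heq ▸ hybnE)
        · rw [key e1 h1E h1P e1a e1b, hfdef] at heq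
          simp only [if_neg e2a, if_pos e2b] at heq
          exact absurd h1E (heq.symm ▸ hybnE)
        · rw [key e1 h1E h1P e1a e1b, key e2 h2E h2P e2a e2b] at heq
          exact heq
end
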